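/- arXiv:1007.2453 — 9 statements merged into one kernel-verified Lean document; each statement's English description precedes it below -/
import Mathlib

section
/- Let G be a graph with orientation ρ. The spanning subgraph B(G,ρ) formed by the union of all directed bonds of (G,ρ) is acyclic, i.e., contains no directed circuit. -/
/-- A directed circuit of the digraph given by `tl, hd : E → V`: a cyclically
ordered nonempty list of distinct edges with distinct vertices, each edge's head
being the next edge's tail. `C` is its edge set. -/
def IsDirectedCircuit {V E : Type} (tl hd : E → V) (C : Set E) : Prop :=
  ∃ l : List E, l ≠ [] ∧ l.Nodup ∧ (l.map tl).Nodup ∧ C = {e | e ∈ l} ∧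
    ∀ i : Fin l.length,
      hd (l.get i) = tl (l.get ⟨(i.1 + 1) % l.length, Nat.mod_lt _ i.pos⟩)

/-- The set of edges between `S` and its complement. -/
def cutSet {V E : Type} (tl hd : E → V) (S : Set V) : Set E :=
  {e | (tl e ∈ S ∧ hd e ∉ S) ∨ (tl e ∉ S ∧ hd e ∈ S)}

/-- A cut: a nonempty edge set of the form `[S, Sᶜ]`. -/
def IsCut {V E : Type} (tl hd : E → V) (C : Set E) : Prop :=
  ∃ S : Set V, C = cutSet tl hd S ∧ C.Nonempty

/-- A bond: a cut not properly containing any cut. -/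
def IsBond {V E : Type} (tl hd : E → V) (C : Set E) : Prop :=
  IsCut tl hd C ∧ ∀ C', IsCut tl hd C' → C' ⊆ C → C' = C

/-- A directed bond: a bond all of whose edges are oriented from `S` to `Sᶜ`. -/
def IsDirectedBond {V E : Type} (tl hd : E → V) (C : Set E) : Prop :=
  IsBond tl hd C ∧ ∃ S : Set V, C = cutSet tl hd S ∧ ∀ e ∈ C, tl e ∈ S ∧ hd e ∉ S

/-- `B_ρ`: the union of the edge sets of all directed bonds. -/
def bondUnion {V E : Type} (tl hd : E → V) : Set E :=
  {e | ∃ C, IsDirectedBond tl hd C ∧ e ∈ C}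

/-!
A directed circuit that leaves a vertex set `S` along one of its edges has to come back:
walking around it from that edge, the tails start outside `S` and eventually return to the
tail of the starting edge, inside `S`, so some edge of the circuit enters `S`. Hence a
directed circuit meets no cut all of whose edges leave `S`, in particular no directed bond.
-/

namespace IsDirectedCircuit

variable {V E : Type} {tl hd : E → V} {C : Set E}

theorem exists_periodic_walk (hC : IsDirectedCircuit tl hd C) :
    ∃ (f : ℕ → E) (n : ℕ), 0 < n ∧ Function.Periodic f n ∧ Set.range f = C ∧
      ∀ i, hd (f i) = tl (f (i + 1)) := by
  obtain ⟨l, hne, -, -, rfl, hcyc⟩ := hC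
  have hpos : 0 < l.length := List.length_pos_iff.mpr hne
  refine ⟨fun i ↦ l.get ⟨i % l.length, Nat.mod_lt _ hpos⟩, l.length, hpos, ?_, ?_, ?_⟩
  · intro i
    simp only [Nat.add_mod_right]
  · ext e
    simp only [Set.mem_range, Set.mem_ofPred_eq, List.mem_iff_get]
    exact ⟨fun ⟨i, hi⟩ ↦ ⟨_, hi⟩, fun ⟨i, hi⟩ ↦ ⟨i, by simpa [Nat.mod_eq_of_lt i.isLt] using hi⟩⟩
  · intro i
    simpa only [Nat.mod_add_mod] using hcyc ⟨i % l.length, Nat.mod_lt _ hpos⟩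

theorem exists_mem_enters_of_mem_leaves (hC : IsDirectedCircuit tl hd C) {S : Set V}
    {e : E} (he : e ∈ C) (htl : tl e ∈ S) (hhd : hd e ∉ S) :
    ∃ e' ∈ C, tl e' ∉ S ∧ hd e' ∈ S := by
  obtain ⟨f, n, hn, hper, hrange, hchain⟩ := hC.exists_periodic_walk
  obtain ⟨j, rfl⟩ : e ∈ Set.range f := hrange ▸ he
  have hreturn : tl (f (j + 1 + (n - 1))) ∈ S := by
    rwa [show j + 1 + (n - 1) = j + n by omega, hper]
  obtain ⟨m, hout, hin⟩ := Nat.exists_not_and_succ_of_not_zero_of_exists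
    (p := fun m ↦ tl (f (j + 1 + m)) ∈ S) (by simpa [← hchain] using hhd) ⟨_, hreturn⟩
  exact ⟨f (j + 1 + m), hrange ▸ Set.mem_range_self _, hout, hchain _ ▸ hin⟩

theorem disjoint_cutSet (hC : IsDirectedCircuit tl hd C) {S : Set V}
    (hS : ∀ e ∈ cutSet tl hd S, tl e ∈ S ∧ hd e ∉ S) : Disjoint C (cutSet tl hd S) := by
  refine Set.disjoint_left.mpr fun e he hcut ↦ ?_
  obtain ⟨htl, hhd⟩ := hS e hcut
  obtain ⟨e', he', htl', hhd'⟩ := hC.exists_mem_enters_of_mem_leaves he htl hhd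
  exact htl' (hS e' (Or.inr ⟨htl', hhd'⟩)).1

theorem nonempty (hC : IsDirectedCircuit tl hd C) : C.Nonempty := by
  obtain ⟨f, -, -, -, hrange, -⟩ := hC.exists_periodic_walk
  exact hrange ▸ Set.range_nonempty f

end IsDirectedCircuit

theorem stmt0_general {V E : Type} (tl hd : E → V) :
    ¬ ∃ C : Set E, IsDirectedCircuit tl hd C ∧ C ⊆ bondUnion tl hd := by
  rintro ⟨C, hC, hsub⟩
  obtain ⟨e, he⟩ := hC.nonempty
  obtain ⟨B, ⟨-, S, rfl, hdir⟩, heB⟩ := hsub he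
  exact Set.disjoint_left.mp (hC.disjoint_cutSet hdir) he heB

/-- The spanning subgraph `B(G,ρ)` formed by the union of all directed bonds is
acyclic: it contains no directed circuit. -/
theorem stmt0 {V E : Type} [Fintype V] [Fintype E] (tl hd : E → V) :
    ¬ ∃ C : Set E, IsDirectedCircuit tl hd C ∧ C ⊆ bondUnion tl hd :=
  stmt0_general tl hd
end

section
/- Let G be a graph with orientation ρ. Let B_ρ be the union of edge sets of all directed bonds and C_ρ the union of edge sets of all directed circuits of (G,ρ). Then B_ρ and C_ρ are disjoint and B_ρ ∪ C_ρ = E(G); that is, every edge of G lies in a directed circuit or in a directed bond, but not both. -/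
/-- `C_ρ`: the union of the edge sets of all directed circuits. -/
def circUnion {V E : Type} (tl hd : E → V) : Set E :=
  {e | ∃ C, IsDirectedCircuit tl hd C ∧ e ∈ C}


section MintyAux
open Relation
variable {V E : Type} (tl hd : E → V)

inductive Walk : V → V → List E → Prop
  | nil (v : V) : Walk v v []
  | cons (e : E) {w : V} {l : List E} : Walk (hd e) w l → Walk (tl e) w (e :: l)

theorem Walk.append' {u w v l₁ l₂} (h₁ : Walk tl hd u w l₁) (h₂ : Walk tl hd w v l₂) :
    Walk tl hd u v (l₁ ++ l₂) := by
  induction h₁ with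
  | nil => exact h₂
  | cons e h ih => exact Walk.cons e (ih h₂)

theorem Walk.start {u v l} (h : Walk tl hd u v l) :
    (l.map tl ++ [v]).getD 0 v = u := by
  cases h with
  | nil => rfl
  | cons e h => rfl

theorem Walk.get' {u v l} (h : Walk tl hd u v l) (i : Fin l.length) :
    hd (l.get i) = (l.map tl ++ [v]).getD (i.1 + 1) v := by
  induction h with
  | nil v => exact absurd i.isLt (by simp)
  | @cons e w l' h ih =>
    match i with
    | ⟨0, _⟩ =>
      have := Walk.start tl hd h
      simpa using this.symm
    | ⟨k + 1, hk⟩ =>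
      simp only [List.length_cons] at hk
      have := ih ⟨k, by omega⟩
      simpa using this

theorem Walk.split {u v l} (h : Walk tl hd u v l) :
    ∀ j ≤ l.length, Walk tl hd u ((l.map tl ++ [v]).getD j v) (l.take j) ∧
      Walk tl hd ((l.map tl ++ [v]).getD j v) v (l.drop j) := by
  induction h with
  | nil v =>
    intro j hj
    have : j = 0 := by simpa using hj
    subst this
    exact ⟨Walk.nil v, Walk.nil v⟩
  | cons e h ih =>
    intro j hj
    match j with
    | 0 => exact ⟨Walk.nil _, Walk.cons e h⟩
    | (j' + 1) =>
      simp only [List.length_cons] at hj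
      obtain ⟨h1, h2⟩ := ih j' (by omega)
      exact ⟨Walk.cons e h1, h2⟩

theorem exists_nodup_walk {u v : V} (h : ∃ l, Walk tl hd u v l) :
    ∃ l, Walk tl hd u v l ∧ (l.map tl ++ [v]).Nodup := by
  classical
  have hP : ∃ n, ∃ l, Walk tl hd u v l ∧ l.length = n := by
    obtain ⟨l, hl⟩ := h
    exact ⟨l.length, l, hl, rfl⟩
  obtain ⟨l, hw, hlen⟩ := Nat.find_spec hP
  refine ⟨l, hw, ?_⟩
  by_contra hnd
  rw [List.nodup_iff_injective_get] at hnd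
  obtain ⟨i, j, hget, hne⟩ := Function.not_injective_iff.mp hnd
  wlog hij : i.1 < j.1 generalizing i j
  · have hji : j.1 < i.1 := by
      rcases Nat.lt_or_ge i.1 j.1 with h' | h'
      · exact absurd h' hij
      · rcases Nat.lt_or_ge j.1 i.1 with h'' | h''
        · exact h''
        · exact absurd (Fin.ext (le_antisymm h'' h')) hne
    exact this j i hget.symm hne.symm hji
  have hLlen : (l.map tl ++ [v]).length = l.length + 1 := by simp
  have hjle : j.1 ≤ l.length := by have := j.isLt; omega
  have hile : i.1 ≤ l.length := by omega
  have hgd : (l.map tl ++ [v]).getD i.1 v = (l.map tl ++ [v]).getD j.1 v := by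
    rw [List.getD_eq_getElem _ _ (by omega), List.getD_eq_getElem _ _ (by omega)]
    simp only [List.get_eq_getElem] at hget
    exact hget
  obtain ⟨h1, _⟩ := Walk.split tl hd hw i.1 hile
  obtain ⟨_, h2⟩ := Walk.split tl hd hw j.1 hjle
  rw [hgd] at h1
  have hw' : Walk tl hd u v (l.take i.1 ++ l.drop j.1) := Walk.append' tl hd h1 h2
  have hlt : (l.take i.1 ++ l.drop j.1).length < Nat.find hP := by
    rw [← hlen]
    simp only [List.length_append, List.length_take, List.length_drop]
    omega
  exact Nat.find_min hP hlt ⟨_, hw', rfl⟩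

theorem walk_of_reflTransGen {u v : V}
    (h : Relation.ReflTransGen (fun x y => ∃ f, tl f = x ∧ hd f = y) u v) :
    ∃ l, Walk tl hd u v l := by
  induction h using Relation.ReflTransGen.head_induction_on with
  | refl => exact ⟨[], Walk.nil v⟩
  | head hstep _ ih =>
    obtain ⟨f, hf1, hf2⟩ := hstep
    obtain ⟨l, hl⟩ := ih
    exact ⟨f :: l, hf1 ▸ Walk.cons f (hf2 ▸ hl)⟩

theorem circuit_of_walk (e : E) {l : List E} (hw : Walk tl hd (hd e) (tl e) l)
    (hnd : (l.map tl ++ [tl e]).Nodup) :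
    ∃ C, IsDirectedCircuit tl hd C ∧ e ∈ C := by
  classical
  set L := e :: l with hLdef
  have hL : Walk tl hd (tl e) (tl e) L := Walk.cons e hw
  have hn : L.length = l.length + 1 := by simp [hLdef]
  have hmapnd : (L.map tl).Nodup := by
    have hperm : (l.map tl ++ [tl e]).Perm (tl e :: l.map tl) := List.perm_append_comm
    have := hperm.nodup hnd
    simpa [hLdef] using this
  refine ⟨{f | f ∈ L}, ⟨L, by simp [hLdef], hmapnd.of_map, hmapnd, rfl, ?_⟩, by simp [hLdef]⟩
  intro i
  have hget := Walk.get' tl hd hL i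
  rcases Nat.lt_or_ge (i.1 + 1) L.length with hlt | hge
  · have hmod : (i.1 + 1) % L.length = i.1 + 1 := Nat.mod_eq_of_lt hlt
    rw [hget]
    have h1 : (L.map tl ++ [tl e]).getD (i.1 + 1) (tl e) = (L.map tl).getD (i.1+1) (tl e) := by
      rw [List.getD_eq_getElem _ _ (by simp only [List.length_append, List.length_map, List.length_cons, List.length_singleton, hn]; omega), List.getD_eq_getElem _ _ (by simp only [List.length_append, List.length_map, List.length_cons, List.length_singleton, hn]; omega)]
      rw [List.getElem_append_left (by simp only [List.length_append, List.length_map, List.length_cons, List.length_singleton, hn]; omega)]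
    rw [h1, List.getD_eq_getElem _ _ (by simp only [List.length_append, List.length_map, List.length_cons, List.length_singleton, hn]; omega)]
    simp only [List.getElem_map]
    congr 1
    simp [List.get_eq_getElem, hmod]
  · have heq : i.1 + 1 = L.length := by have := i.isLt; omega
    have hmod : (i.1 + 1) % L.length = 0 := by rw [heq]; simp
    rw [hget]
    have h1 : (L.map tl ++ [tl e]).getD (i.1 + 1) (tl e) = tl e := by
      rw [List.getD_eq_getElem _ _ (by simp only [List.length_append, List.length_map, List.length_cons, List.length_singleton, hn]; omega)]
      rw [List.getElem_append_right (by simp only [List.length_append, List.length_map, List.length_cons, List.length_singleton, hn]; omega)]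
      simp [heq]
    rw [h1]
    have hmod' : (i.1 + 1) % (l.length + 1) = 0 := by rw [← hn]; exact hmod
    simp [List.get_eq_getElem, hLdef, hmod']

theorem mem_cutSet' {W : Set V} {f : E} :
    f ∈ cutSet tl hd W ↔ ((tl f ∈ W ∧ hd f ∉ W) ∨ (tl f ∉ W ∧ hd f ∈ W)) := Iff.rfl

theorem cutSet_compl (W : Set V) : cutSet tl hd Wᶜ = cutSet tl hd W := by
  ext f
  simp only [mem_cutSet', Set.mem_compl_iff]
  tauto

theorem exists_directed_bond [Fintype E] (e : E)
    (hex : ∃ C : Set E, (e ∈ C ∧ ∃ W, C = cutSet tl hd W ∧ ∀ f ∈ C, tl f ∈ W ∧ hd f ∉ W)) :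
    ∃ C, IsDirectedBond tl hd C ∧ e ∈ C := by
  classical
  set Q : Set E → Prop :=
    fun C => e ∈ C ∧ ∃ W, C = cutSet tl hd W ∧ ∀ f ∈ C, tl f ∈ W ∧ hd f ∉ W with hQdef
  have hP : ∃ n, ∃ C, Q C ∧ C.ncard = n := by
    obtain ⟨C, hC⟩ := hex
    exact ⟨C.ncard, C, hC, rfl⟩
  obtain ⟨C, hQC, hncard⟩ := Nat.find_spec hP
  obtain ⟨heC, W, hCW, hdir⟩ := hQC
  have hmin : ∀ A : Set E, Q A → A ⊆ C → A = C := by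
    intro A hQA hAC
    have h1 : Nat.find hP ≤ A.ncard := Nat.find_le ⟨A, hQA, rfl⟩
    exact Set.eq_of_subset_of_ncard_le hAC (by omega) (Set.toFinite C)
  have key1 : ∀ T : Set V, cutSet tl hd T ⊆ C → tl e ∈ T → ∀ f ∈ C, tl f ∈ T := by
    intro T hsub hte f hfC
    have hAC : cutSet tl hd (T ∩ W) ⊆ C := by
      intro g hg
      by_contra hgC
      have hgT : g ∉ cutSet tl hd T := fun h => hgC (hsub h)
      have hgW : g ∉ cutSet tl hd W := by rw [← hCW]; exact hgC
      simp only [mem_cutSet', Set.mem_inter_iff] at hg hgT hgW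
      tauto
    have hmemA : ∀ g ∈ cutSet tl hd (T ∩ W), tl g ∈ T ∩ W ∧ hd g ∉ T ∩ W := by
      intro g hg
      have hgC := hAC hg
      have hgd := hdir g hgC
      simp only [mem_cutSet', Set.mem_inter_iff] at hg ⊢
      tauto
    have hQA : Q (cutSet tl hd (T ∩ W)) := by
      refine ⟨?_, T ∩ W, rfl, hmemA⟩
      have hed := hdir e heC
      simp only [mem_cutSet', Set.mem_inter_iff]
      tauto
    have hAeq := hmin _ hQA hAC
    rw [← hAeq] at hfC
    exact ((hmemA f hfC).1).1
  have key2 : ∀ T : Set V, cutSet tl hd T ⊆ C → hd e ∉ T → ∀ f ∈ C, hd f ∉ T := by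
    intro T hsub hhe f hfC
    have hBC : cutSet tl hd (T ∪ W) ⊆ C := by
      intro g hg
      by_contra hgC
      have hgT : g ∉ cutSet tl hd T := fun h => hgC (hsub h)
      have hgW : g ∉ cutSet tl hd W := by rw [← hCW]; exact hgC
      simp only [mem_cutSet', Set.mem_union] at hg hgT hgW
      tauto
    have hmemB : ∀ g ∈ cutSet tl hd (T ∪ W), tl g ∈ T ∪ W ∧ hd g ∉ T ∪ W := by
      intro g hg
      have hgC := hBC hg
      have hgd := hdir g hgC
      simp only [mem_cutSet', Set.mem_union] at hg ⊢
      tauto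
    have hQB : Q (cutSet tl hd (T ∪ W)) := by
      refine ⟨?_, T ∪ W, rfl, hmemB⟩
      have hed := hdir e heC
      simp only [mem_cutSet', Set.mem_union]
      tauto
    have hBeq := hmin _ hQB hBC
    rw [← hBeq] at hfC
    intro hfT
    exact (hmemB f hfC).2 (Or.inl hfT)
  refine ⟨C, ⟨⟨⟨W, hCW, ⟨e, heC⟩⟩, ?_⟩, W, hCW, hdir⟩, heC⟩
  intro C' hcut hsub
  obtain ⟨T, hC'T, hC'ne⟩ := hcut
  subst hC'T
  obtain ⟨T₀, hT₀eq, hte₀⟩ : ∃ T₀, cutSet tl hd T₀ = cutSet tl hd T ∧ tl e ∈ T₀ := by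
    by_cases h : tl e ∈ T
    · exact ⟨T, rfl, h⟩
    · exact ⟨Tᶜ, cutSet_compl tl hd T, h⟩
  have hsub₀ : cutSet tl hd T₀ ⊆ C := hT₀eq ▸ hsub
  have h1 := key1 T₀ hsub₀ hte₀
  by_cases hhd : hd e ∈ T₀
  · have hsubc : cutSet tl hd T₀ᶜ ⊆ C := by rw [cutSet_compl]; exact hsub₀
    have h2 := key2 T₀ᶜ hsubc (by simpa using hhd)
    obtain ⟨f, hf⟩ := hC'ne
    have hfC : f ∈ C := hsub hf
    have hft := h1 f hfC
    have hfh : hd f ∈ T₀ := by simpa using h2 f hfC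
    rw [← hT₀eq] at hf
    simp only [mem_cutSet'] at hf
    tauto
  · have h2 := key2 T₀ hsub₀ hhd
    refine Set.Subset.antisymm hsub ?_
    intro f hfC
    rw [← hT₀eq]
    exact Or.inl ⟨h1 f hfC, h2 f hfC⟩

end MintyAux
/-- `B_ρ` and `C_ρ` are disjoint and their union is the whole edge set: every
edge lies in a directed circuit or in a directed bond, but not both. -/
theorem stmt1 {V E : Type} [Fintype V] [Fintype E] (tl hd : E → V) :
    bondUnion tl hd ∩ circUnion tl hd = ∅ ∧
    bondUnion tl hd ∪ circUnion tl hd = Set.univ := by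
  classical
  constructor
  · rw [Set.eq_empty_iff_forall_notMem]
    rintro e ⟨hb, hc⟩
    obtain ⟨C, ⟨⟨hcut, hminC⟩, S, hCS, hdirS⟩, heC⟩ := hb
    obtain ⟨Cc, ⟨l, hlne, hlnd, hmapnd, hCeq, hcyc⟩, heCc⟩ := hc
    have hel : e ∈ l := by rw [hCeq] at heCc; exact heCc
    obtain ⟨i0, hi0⟩ := List.mem_iff_get.mp hel
    have hn : 0 < l.length := List.length_pos_iff.mpr hlne
    obtain ⟨htleS, hhdeS⟩ := hdirS e heC
    have key : ∀ j : ℕ, hd (l.get ⟨(i0.1 + j) % l.length, Nat.mod_lt _ hn⟩)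
        = tl (l.get ⟨(i0.1 + (j + 1)) % l.length, Nat.mod_lt _ hn⟩) := by
      intro j
      have h := hcyc ⟨(i0.1 + j) % l.length, Nat.mod_lt _ hn⟩
      rw [h]
      congr 1
      congr 1
      apply Fin.ext
      show ((i0.1 + j) % l.length + 1) % l.length = (i0.1 + (j + 1)) % l.length
      rw [Nat.mod_add_mod, Nat.add_assoc]
    have hPex : ∃ j, 1 ≤ j ∧ tl (l.get ⟨(i0.1 + j) % l.length, Nat.mod_lt _ hn⟩) ∈ S := by
      refine ⟨l.length, hn, ?_⟩
      have hidx : (⟨(i0.1 + l.length) % l.length, Nat.mod_lt _ hn⟩ : Fin l.length) = i0 := by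
        apply Fin.ext
        show (i0.1 + l.length) % l.length = i0.1
        rw [Nat.add_mod_right]
        exact Nat.mod_eq_of_lt i0.isLt
      rw [hidx, hi0]
      exact htleS
    have hspec := Nat.find_spec hPex
    set j₀ := Nat.find hPex with hj₀def
    have hne1 : j₀ ≠ 1 := by
      intro h1
      have h0 := key 0
      have hidx : (⟨(i0.1 + 0) % l.length, Nat.mod_lt _ hn⟩ : Fin l.length) = i0 := by
        apply Fin.ext
        show (i0.1 + 0) % l.length = i0.1
        rw [Nat.add_zero]
        exact Nat.mod_eq_of_lt i0.isLt
      rw [hidx, hi0] at h0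
      have := hspec.2
      rw [h1] at this
      rw [← h0] at this
      exact hhdeS this
    have h2le : 2 ≤ j₀ := by
      have := hspec.1
      omega
    have hmin := Nat.find_min hPex (show j₀ - 1 < j₀ by omega)
    have hnotS : tl (l.get ⟨(i0.1 + (j₀ - 1)) % l.length, Nat.mod_lt _ hn⟩) ∉ S :=
      fun hmem => hmin ⟨by omega, hmem⟩
    have hkey := key (j₀ - 1)
    have hjj : j₀ - 1 + 1 = j₀ := by omega
    rw [hjj] at hkey
    set f := l.get ⟨(i0.1 + (j₀ - 1)) % l.length, Nat.mod_lt _ hn⟩ with hfdef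
    have hfcut : f ∈ cutSet tl hd S := Or.inr ⟨hnotS, by rw [hkey]; exact hspec.2⟩
    have hfC : f ∈ C := by rw [hCS]; exact hfcut
    exact hnotS (hdirS f hfC).1
  · rw [Set.eq_univ_iff_forall]
    intro e
    by_cases hr : Relation.ReflTransGen (fun x y => ∃ f, tl f = x ∧ hd f = y) (hd e) (tl e)
    · obtain ⟨l, hw⟩ := walk_of_reflTransGen tl hd hr
      obtain ⟨l', hw', hnd⟩ := exists_nodup_walk tl hd ⟨l, hw⟩
      obtain ⟨C, hC, heC⟩ := circuit_of_walk tl hd e hw' hnd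
      exact Or.inr ⟨C, hC, heC⟩
    · set R := {v | Relation.ReflTransGen (fun x y => ∃ f, tl f = x ∧ hd f = y) (hd e) v}
        with hRdef
      have hclosed : ∀ f : E, tl f ∈ R → hd f ∈ R := by
        intro f h
        exact h.tail ⟨f, rfl, rfl⟩
      have hbond : ∃ C, IsDirectedBond tl hd C ∧ e ∈ C := by
        apply exists_directed_bond tl hd e
        refine ⟨cutSet tl hd Rᶜ, ?_, Rᶜ, rfl, ?_⟩
        · exact Or.inl ⟨hr, fun h => h Relation.ReflTransGen.refl⟩
        · intro f hf
          rcases hf with ⟨h1, h2⟩ | ⟨h1, h2⟩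
          · exact ⟨h1, h2⟩
          · exfalso
            exact h2 (hclosed f (Set.not_notMem.mp h1))
      exact Or.inl hbond
end

section
/- Every edge of a digraph that does not lie on a directed circuit lies on a directed cut. More precisely: if e is an edge of (G,ρ), oriented from u to v, that is contained in no directed circuit, and V₁ is the set of vertices from which there is a directed path (possibly of length zero) to u, then v ∉ V₁ and every edge of the cut [V₁,V₁^c] is oriented from V₁ to V₁^c, so [V₁,V₁^c] is a directed cut containing e. -/
/-- A directed cut: a nonempty cut `[S,Sᶜ]` all of whose edges go from `S` to `Sᶜ`. -/
def IsDirectedCut {V E : Type} (tl hd : E → V) (C : Set E) : Prop :=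
  ∃ S : Set V, C = cutSet tl hd S ∧ C.Nonempty ∧ ∀ e ∈ C, tl e ∈ S ∧ hd e ∉ S

/-- Directed reachability: there is a directed path (possibly of length zero). -/
def DReach {V E : Type} (tl hd : E → V) : V → V → Prop :=
  Relation.ReflTransGen (fun a b => ∃ e, tl e = a ∧ hd e = b)

/-!
If `hd e` could reach `tl e`, a walk between them with no repeated tail, closed up by `e`,
would be a directed circuit through `e`. So `V₁` misses `hd e`; and since `V₁` contains every
predecessor of its vertices, no edge of the cut enters it.
-/

theorem List.IsChain.rel_get_succ_mod {α : Type*} {R : α → α → Prop} {a : α} {l : List α}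
    (h : IsChain R (a :: l ++ [a])) (i : Fin (a :: l).length) :
    R ((a :: l).get i) ((a :: l).get ⟨(i.1 + 1) % (a :: l).length, Nat.mod_lt _ i.pos⟩) := by
  obtain ⟨i, hi⟩ := i
  have hR := h.getElem i (by simp only [length_append, length_cons] at hi ⊢; omega)
  rw [getElem_append_left hi] at hR
  rcases Nat.lt_or_ge (i + 1) (a :: l).length with hlt | hge
  · rw [getElem_append_left hlt] at hR
    simpa only [get_eq_getElem, Nat.mod_eq_of_lt hlt] using hR
  · have hend : i + 1 = (a :: l).length := by omega
    simp only [get_eq_getElem, hend, Nat.mod_self]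
    simpa [hend] using hR

variable {V E : Type} {tl hd : E → V}

variable (tl hd) in
def IsWalk : List E → V → V → Prop
  | [], a, b => a = b
  | e :: es, a, b => tl e = a ∧ IsWalk es (hd e) b

theorem IsWalk.isChain_append_singleton {es : List E} {a : V} {f : E}
    (hw : IsWalk tl hd es a (tl f)) : (es ++ [f]).IsChain (fun x y => hd x = tl y) := by
  induction es generalizing a with
  | nil => exact .singleton f
  | cons e es ih =>
    obtain ⟨-, hw⟩ := hw
    cases es with
    | nil => exact .cons_cons hw (.singleton f)
    | cons g gs => exact .cons_cons hw.1.symm (ih hw)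

theorem IsWalk.exists_right_of_append {s t : List E} {a b : V} (hw : IsWalk tl hd (s ++ t) a b) :
    ∃ c, IsWalk tl hd t c b := by
  induction s generalizing a with
  | nil => exact ⟨a, hw⟩
  | cons e s ih => exact ih hw.2

theorem exists_isWalk_nodup_of_dReach {a b : V} (h : DReach tl hd a b) :
    ∃ es, IsWalk tl hd es a b ∧ (b :: es.map tl).Nodup := by
  induction h using Relation.ReflTransGen.head_induction_on with
  | refl => exact ⟨[], rfl, List.nodup_singleton b⟩
  | head hf _ ih =>
    obtain ⟨f, rfl, rfl⟩ := hf
    obtain ⟨es, hw, hnd⟩ := ih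
    by_cases hmem : tl f ∈ b :: es.map tl
    · rcases List.mem_cons.1 hmem with hb | hes
      · exact ⟨[], hb, List.nodup_singleton b⟩
      · -- `tl f` is revisited: drop the closed subwalk by restarting at the edge leaving it
        obtain ⟨g, hg, hgf⟩ := List.mem_map.1 hes
        obtain ⟨s, t, rfl⟩ := List.append_of_mem hg
        obtain ⟨_, -, ht⟩ := hw.exists_right_of_append
        refine ⟨g :: t, ⟨hgf, ht⟩, hnd.sublist ?_⟩
        exact ((List.sublist_append_right s (g :: t)).map tl).cons_cons b
    · refine ⟨f :: es, ⟨rfl, hw⟩, ?_⟩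
      exact (List.Perm.swap _ _ _).nodup_iff.1 (List.nodup_cons.2 ⟨hmem, hnd⟩)

theorem isDirectedCircuit_of_isWalk {e : E} {es : List E} (hw : IsWalk tl hd es (hd e) (tl e))
    (hnd : (tl e :: es.map tl).Nodup) : IsDirectedCircuit tl hd {x | x ∈ e :: es} :=
  ⟨e :: es, List.cons_ne_nil e es, List.Nodup.of_map tl (l := e :: es) hnd, hnd, rfl,
    (IsWalk.isChain_append_singleton (es := e :: es) ⟨rfl, hw⟩).rel_get_succ_mod⟩

theorem exists_isDirectedCircuit_mem_of_dReach {e : E} (h : DReach tl hd (hd e) (tl e)) :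
    ∃ C, IsDirectedCircuit tl hd C ∧ e ∈ C := by
  obtain ⟨es, hw, hnd⟩ := exists_isWalk_nodup_of_dReach h
  exact ⟨_, isDirectedCircuit_of_isWalk hw hnd, List.mem_cons_self⟩

theorem tl_mem_and_hd_not_mem_of_mem_cutSet {S : Set V} (hS : ∀ f, hd f ∈ S → tl f ∈ S) :
    ∀ f ∈ cutSet tl hd S, tl f ∈ S ∧ hd f ∉ S := by
  rintro f (hout | ⟨htl, hhd⟩)
  · exact hout
  · exact absurd (hS f hhd) htl

theorem isDirectedCut_cutSet {S : Set V} (hS : ∀ f, hd f ∈ S → tl f ∈ S) {e : E}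
    (he : tl e ∈ S ∧ hd e ∉ S) : IsDirectedCut tl hd (cutSet tl hd S) :=
  ⟨S, rfl, ⟨e, Or.inl he⟩, tl_mem_and_hd_not_mem_of_mem_cutSet hS⟩

theorem stmt2_general {V E : Type} (tl hd : E → V) (e : E) (u v : V)
    (hu : tl e = u) (hv : hd e = v)
    (hnc : ∀ C : Set E, IsDirectedCircuit tl hd C → e ∉ C) :
    v ∉ {w | DReach tl hd w u} ∧
    (∀ e' ∈ cutSet tl hd {w | DReach tl hd w u},
        tl e' ∈ {w | DReach tl hd w u} ∧ hd e' ∉ {w | DReach tl hd w u}) ∧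
    e ∈ cutSet tl hd {w | DReach tl hd w u} ∧
    IsDirectedCut tl hd (cutSet tl hd {w | DReach tl hd w u}) := by
  subst hu hv
  set V₁ := {w | DReach tl hd w (tl e)}
  have hout : hd e ∉ V₁ := fun h =>
    let ⟨C, hC, heC⟩ := exists_isDirectedCircuit_mem_of_dReach h
    hnc C hC heC
  have hclosed : ∀ f, hd f ∈ V₁ → tl f ∈ V₁ := fun f h =>
    Relation.ReflTransGen.head ⟨f, rfl, rfl⟩ h
  have he : tl e ∈ V₁ ∧ hd e ∉ V₁ := ⟨Relation.ReflTransGen.refl, hout⟩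
  exact ⟨hout, tl_mem_and_hd_not_mem_of_mem_cutSet hclosed, Or.inl he,
    isDirectedCut_cutSet hclosed he⟩

/-- If the edge `e`, oriented from `u` to `v`, lies on no directed circuit, and
`V₁` is the set of vertices from which there is a directed path to `u`, then
`v ∉ V₁`, every edge of the cut `[V₁,V₁ᶜ]` is oriented from `V₁` to `V₁ᶜ`, and
`[V₁,V₁ᶜ]` is a directed cut containing `e`. -/
theorem stmt2 {V E : Type} [Fintype V] [Fintype E] (tl hd : E → V) (e : E) (u v : V)
    (hu : tl e = u) (hv : hd e = v)
    (hnc : ∀ C : Set E, IsDirectedCircuit tl hd C → e ∉ C) :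
    v ∉ {w | DReach tl hd w u} ∧
    (∀ e' ∈ cutSet tl hd {w | DReach tl hd w u},
        tl e' ∈ {w | DReach tl hd w u} ∧ hd e' ∉ {w | DReach tl hd w u}) ∧
    e ∈ cutSet tl hd {w | DReach tl hd w u} ∧
    IsDirectedCut tl hd (cutSet tl hd {w | DReach tl hd w u}) :=
  stmt2_general tl hd e u v hu hv hnc
end

section
/- Let Ω₁,…,Ωₙ be non-empty sets, and for each i let 𝓛ᵢ be an intersectional class of subsets of Ωᵢ with generated relative Boolean algebra 𝓑ᵢ, and let νᵢ : 𝓑ᵢ → R be a valuation with values in a commutative ring R. Then there exists a unique valuation ν on the relative Boolean algebra ∏𝓑ᵢ generated by the products ∏Aᵢ (Aᵢ ∈ 𝓛ᵢ) such that ν(∏Bᵢ) = ∏νᵢ(Bᵢ) for all Bᵢ ∈ 𝓑ᵢ. -/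
open scoped Classical

/-- The relative Boolean algebra (closure under intersection, union and relative
complement) generated by a class `L` of subsets. -/
inductive RelBool {α : Type} (L : Set (Set α)) : Set α → Prop
  | base {A : Set α} : A ∈ L → RelBool L A
  | inter {A B : Set α} : RelBool L A → RelBool L B → RelBool L (A ∩ B)
  | union {A B : Set α} : RelBool L A → RelBool L B → RelBool L (A ∪ B)
  | sdiff {A B : Set α} : RelBool L A → RelBool L B → RelBool L (A \ B)

/-- A valuation (finitely additive set function) on a class `B` of subsets. -/
def IsValuation {α R : Type} [CommRing R] (B : Set (Set α)) (ν : Set α → R) : Prop :=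
  ν ∅ = 0 ∧ ∀ X ∈ B, ∀ Y ∈ B, ν (X ∪ Y) + ν (X ∩ Y) = ν X + ν Y

/-- The class of cartesian products `∏ᵢ Aᵢ` with `Aᵢ ∈ Lᵢ`. -/
def prodGenClass {n : ℕ} {Ω : Fin n → Type} (L : ∀ i, Set (Set (Ω i))) :
    Set (Set (∀ i, Ω i)) :=
  {P | ∃ A : ∀ i, Set (Ω i), (∀ i, A i ∈ L i) ∧ P = Set.univ.pi A}

section Aux
variable {R : Type} [CommRing R]

lemma linG_single {σ : Type} (W : σ → R) (A : σ) (r : R) :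
    (Finsupp.single A r).sum (fun B t => t * W B) = r * W A :=
  Finsupp.sum_single_index (by simp)

lemma linG_add {σ : Type} (W : σ → R) (f g : σ →₀ R) :
    (f + g).sum (fun B t => t * W B)
      = f.sum (fun B t => t * W B) + g.sum (fun B t => t * W B) :=
  Finsupp.sum_add_index' (by simp) (by intros; ring)

lemma linG_sub {σ : Type} (W : σ → R) (f g : σ →₀ R) :
    (f - g).sum (fun B t => t * W B)
      = f.sum (fun B t => t * W B) - g.sum (fun B t => t * W B) :=
  Finsupp.sum_sub_index (by intros; ring)

noncomputable def convG {σ : Type} (m : σ → σ → σ) (f g : σ →₀ R) : σ →₀ R :=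
  f.sum fun A r => g.sum fun B t => Finsupp.single (m A B) (r * t)

lemma convG_support {σ : Type} (m : σ → σ → σ) (f g : σ →₀ R) :
    ∀ C ∈ (convG m f g).support, ∃ A ∈ f.support, ∃ B ∈ g.support, C = m A B := by
  classical
  intro C hC
  have h1 := Finsupp.support_sum hC
  rw [Finset.mem_biUnion] at h1
  obtain ⟨A, hA, hC1⟩ := h1
  have h2 := Finsupp.support_sum hC1
  rw [Finset.mem_biUnion] at h2
  obtain ⟨B, hB, hC2⟩ := h2
  have h3 := Finsupp.support_single_subset hC2
  exact ⟨A, hA, B, hB, by simpa using h3⟩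

lemma linG_conv {σ : Type} (W : σ → R) (m : σ → σ → σ)
    (hW : ∀ A B, W (m A B) = W A * W B) (f g : σ →₀ R) :
    (convG m f g).sum (fun B t => t * W B)
      = f.sum (fun B t => t * W B) * g.sum (fun B t => t * W B) := by
  calc (convG m f g).sum (fun B t => t * W B)
      = f.sum (fun A r => (g.sum fun B t => Finsupp.single (m A B) (r * t)).sum
          (fun B t => t * W B)) :=
        Finsupp.sum_sum_index (by simp) (by intros; ring)
    _ = f.sum (fun A r => g.sum fun B t => (r * t) * W (m A B)) := by
        refine Finsupp.sum_congr fun A _ => ?_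
        rw [Finsupp.sum_sum_index (by simp) (by intros; ring)]
        exact Finsupp.sum_congr fun B _ => linG_single W _ _
    _ = f.sum (fun A r => (r * W A) * g.sum (fun B t => t * W B)) := by
        refine Finsupp.sum_congr fun A _ => ?_
        rw [Finsupp.mul_sum]
        exact Finsupp.sum_congr fun B _ => by rw [hW]; ring
    _ = f.sum (fun B t => t * W B) * g.sum (fun B t => t * W B) :=
        (Finsupp.sum_mul _ f).symm

lemma mem_biUnion_cls {α ι : Type} {𝓑 : Set (Set α)}
    (hu : ∀ A ∈ 𝓑, ∀ B ∈ 𝓑, A ∪ B ∈ 𝓑) (he : ∅ ∈ 𝓑)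
    (t : Finset ι) (C : ι → Set α) :
    (∀ k ∈ t, C k ∈ 𝓑) → (⋃ k ∈ t, C k) ∈ 𝓑 := by
  classical
  induction t using Finset.induction_on with
  | empty => intro _; simpa using he
  | @insert a t ha ih =>
    intro hC
    rw [Finset.set_biUnion_insert]
    exact hu _ (hC a (Finset.mem_insert_self a t)) _
      (ih fun k hk => hC k (Finset.mem_insert_of_mem hk))

lemma val_biUnion {α ι : Type} {𝓑 : Set (Set α)} {ν : Set α → R}
    (hu : ∀ A ∈ 𝓑, ∀ B ∈ 𝓑, A ∪ B ∈ 𝓑) (he : ∅ ∈ 𝓑)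
    (h0 : ν ∅ = 0)
    (hadd : ∀ X ∈ 𝓑, ∀ Y ∈ 𝓑, ν (X ∪ Y) + ν (X ∩ Y) = ν X + ν Y)
    (t : Finset ι) (C : ι → Set α) :
    (∀ k ∈ t, C k ∈ 𝓑) → (∀ k ∈ t, ∀ l ∈ t, k ≠ l → C k ∩ C l = ∅) →
    ν (⋃ k ∈ t, C k) = ∑ k ∈ t, ν (C k) := by
  classical
  induction t using Finset.induction_on with
  | empty => intro _ _; simpa using h0
  | @insert a t ha ih =>
    intro hC hdis
    rw [Finset.set_biUnion_insert]
    have hca : C a ∈ 𝓑 := hC a (Finset.mem_insert_self a t)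
    have hUt : (⋃ k ∈ t, C k) ∈ 𝓑 :=
      mem_biUnion_cls hu he t C fun k hk => hC k (Finset.mem_insert_of_mem hk)
    have hdisj : C a ∩ ⋃ k ∈ t, C k = ∅ := by
      rw [Set.eq_empty_iff_forall_notMem]
      rintro x ⟨hxa, hxU⟩
      rw [Set.mem_iUnion₂] at hxU
      obtain ⟨k, hk, hxk⟩ := hxU
      have hne : a ≠ k := by rintro rfl; exact ha hk
      have := hdis a (Finset.mem_insert_self a t) k (Finset.mem_insert_of_mem hk) hne
      exact Set.eq_empty_iff_forall_notMem.mp this x ⟨hxa, hxk⟩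
    have h := hadd (C a) hca _ hUt
    rw [hdisj, h0, add_zero] at h
    rw [h, Finset.sum_insert ha,
      ih (fun k hk => hC k (Finset.mem_insert_of_mem hk))
        (fun k hk l hl hkl => hdis k (Finset.mem_insert_of_mem hk) l (Finset.mem_insert_of_mem hl) hkl)]

lemma valuation_key {α : Type} {𝓑 : Set (Set α)} {ν : Set α → R}
    (hi : ∀ A ∈ 𝓑, ∀ B ∈ 𝓑, A ∩ B ∈ 𝓑)
    (hu : ∀ A ∈ 𝓑, ∀ B ∈ 𝓑, A ∪ B ∈ 𝓑)
    (hd : ∀ A ∈ 𝓑, ∀ B ∈ 𝓑, A \ B ∈ 𝓑)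
    (he : ∅ ∈ 𝓑) (h0 : ν ∅ = 0)
    (hadd : ∀ X ∈ 𝓑, ∀ Y ∈ 𝓑, ν (X ∪ Y) + ν (X ∩ Y) = ν X + ν Y)
    {ι : Type} (s : Finset ι) (A : ι → Set α) (w : ι → R)
    (hA : ∀ j ∈ s, A j ∈ 𝓑)
    (hw : ∀ x : α, ∑ j ∈ s.filter (fun j => x ∈ A j), w j = 0) :
    ∑ j ∈ s, w j * ν (A j) = 0 := by
  classical
  set U : Set α := ⋃ j ∈ s, A j with hUdef
  have hUmem : U ∈ 𝓑 := mem_biUnion_cls hu he s A hA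
  set F : α → Finset ι := fun x => s.filter (fun j => x ∈ A j) with hFdef
  have hInter : ∀ T : Finset ι, T ⊆ s → (U ∩ ⋂ j ∈ T, A j) ∈ 𝓑 := by
    intro T
    induction T using Finset.induction_on with
    | empty => intro _; simpa using hUmem
    | @insert a T ha ih =>
      intro hsub
      have heq : (U ∩ ⋂ j ∈ insert a T, A j) = A a ∩ (U ∩ ⋂ j ∈ T, A j) := by
        rw [Finset.set_biInter_insert, Set.inter_left_comm]
      rw [heq]
      exact hi _ (hA a (hsub (Finset.mem_insert_self a T))) _
        (ih fun x hx => hsub (Finset.mem_insert_of_mem hx))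
  set S : Finset ι → Set α := fun T => (U ∩ ⋂ j ∈ T, A j) \ (⋃ j ∈ s \ T, A j) with hSdef
  have hSmem : ∀ T ⊆ s, S T ∈ 𝓑 := fun T hT =>
    hd _ (hInter T hT) _
      (mem_biUnion_cls hu he _ A fun k hk => hA k (Finset.mem_sdiff.mp hk).1)
  have claim1 : ∀ x ∈ U, x ∈ S (F x) := by
    intro x hx
    refine ⟨⟨hx, ?_⟩, ?_⟩
    · simp only [Set.mem_iInter]
      intro j hj
      exact (Finset.mem_filter.mp hj).2
    · simp only [Set.mem_iUnion, not_exists]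
      intro j hj hxj
      rw [Finset.mem_sdiff, hFdef, Finset.mem_filter] at hj
      exact hj.2 ⟨hj.1, hxj⟩
  have claim2 : ∀ T ⊆ s, ∀ x ∈ S T, F x = T := by
    intro T hT x hx
    obtain ⟨⟨hxU, hx1⟩, hx2⟩ := hx
    simp only [Set.mem_iInter] at hx1
    simp only [Set.mem_iUnion, not_exists] at hx2
    ext j
    rw [hFdef]
    simp only [Finset.mem_filter]
    constructor
    · rintro ⟨hjs, hxj⟩
      by_contra hjT
      exact hx2 j (Finset.mem_sdiff.mpr ⟨hjs, hjT⟩) hxj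
    · intro hjT
      exact ⟨hT hjT, hx1 j hjT⟩
  have hpart : ∀ j ∈ s, A j = ⋃ T ∈ (s.powerset).filter (fun T => j ∈ T), S T := by
    intro j hj
    ext x
    rw [Set.mem_iUnion₂]
    constructor
    · intro hx
      refine ⟨F x, ?_, claim1 x (Set.mem_biUnion hj hx)⟩
      rw [Finset.mem_filter, Finset.mem_powerset]
      exact ⟨Finset.filter_subset _ _, Finset.mem_filter.mpr ⟨hj, hx⟩⟩
    · rintro ⟨T, hT, hx⟩
      rw [Finset.mem_filter, Finset.mem_powerset] at hT
      obtain ⟨⟨_, hx1⟩, _⟩ := hx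
      simp only [Set.mem_iInter] at hx1
      exact hx1 j hT.2
  have hval : ∀ j ∈ s, ν (A j) = ∑ T ∈ (s.powerset).filter (fun T => j ∈ T), ν (S T) := by
    intro j hj
    rw [hpart j hj]
    refine val_biUnion hu he h0 hadd _ S (fun T hT => ?_) (fun T hT T' hT' hne => ?_)
    · exact hSmem T (Finset.mem_powerset.mp (Finset.mem_filter.mp hT).1)
    · rw [Set.eq_empty_iff_forall_notMem]
      rintro x ⟨h1, h2⟩
      have e1 := claim2 T (Finset.mem_powerset.mp (Finset.mem_filter.mp hT).1) x h1
      have e2 := claim2 T' (Finset.mem_powerset.mp (Finset.mem_filter.mp hT').1) x h2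
      exact hne (e1 ▸ e2 ▸ rfl)
  calc ∑ j ∈ s, w j * ν (A j)
      = ∑ j ∈ s, ∑ T ∈ (s.powerset).filter (fun T => j ∈ T), w j * ν (S T) := by
        refine Finset.sum_congr rfl fun j hj => ?_
        rw [hval j hj, Finset.mul_sum]
    _ = ∑ j ∈ s, ∑ T ∈ s.powerset, if j ∈ T then w j * ν (S T) else 0 := by
        exact Finset.sum_congr rfl fun j _ => (Finset.sum_filter _ _)
    _ = ∑ T ∈ s.powerset, ∑ j ∈ s, if j ∈ T then w j * ν (S T) else 0 := Finset.sum_comm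
    _ = ∑ T ∈ s.powerset, (∑ j ∈ T, w j) * ν (S T) := by
        refine Finset.sum_congr rfl fun T hT => ?_
        rw [← Finset.sum_filter, Finset.filter_mem_eq_inter,
          Finset.inter_eq_right.mpr (Finset.mem_powerset.mp hT), Finset.sum_mul]
    _ = 0 := by
        refine Finset.sum_eq_zero fun T hT => ?_
        by_cases hS0 : S T = ∅
        · rw [hS0, h0, mul_zero]
        · obtain ⟨x, hx⟩ := Set.nonempty_iff_ne_empty.mpr hS0
          have e := claim2 T (Finset.mem_powerset.mp hT) x hx
          have : ∑ j ∈ T, w j = 0 := by rw [← e]; exact hw x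
          rw [this, zero_mul]

lemma valuation_key' {α : Type} {𝓑 : Set (Set α)} {ν : Set α → R}
    (hi : ∀ A ∈ 𝓑, ∀ B ∈ 𝓑, A ∩ B ∈ 𝓑)
    (hu : ∀ A ∈ 𝓑, ∀ B ∈ 𝓑, A ∪ B ∈ 𝓑)
    (hd : ∀ A ∈ 𝓑, ∀ B ∈ 𝓑, A \ B ∈ 𝓑)
    (he : ∅ ∈ 𝓑) (h0 : ν ∅ = 0)
    (hadd : ∀ X ∈ 𝓑, ∀ Y ∈ 𝓑, ν (X ∪ Y) + ν (X ∩ Y) = ν X + ν Y)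
    {ι : Type} (s : Finset ι) (A : ι → Set α) (w : ι → R) (X : Set α)
    (hX : X ∈ 𝓑) (hA : ∀ j ∈ s, A j ∈ 𝓑)
    (hw : ∀ x : α, ∑ j ∈ s.filter (fun j => x ∈ A j), w j
        = X.indicator (fun _ => (1:R)) x) :
    ∑ j ∈ s, w j * ν (A j) = ν X := by
  classical
  set A' : Option ι → Set α := fun o => Option.rec X A o with hA'def
  set w' : Option ι → R := fun o => Option.rec (-1 : R) w o with hw'def
  have hnone : (none : Option ι) ∉ s.image some := by simp
  have key := valuation_key hi hu hd he h0 hadd (insert none (s.image some)) A' w'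
      ?_ ?_
  · rw [Finset.sum_insert hnone,
      Finset.sum_image (fun a _ b _ h => Option.some_injective _ h)] at key
    have : (-1 : R) * ν X + ∑ j ∈ s, w j * ν (A j) = 0 := key
    linear_combination this
  · rintro (_ | j) ho
    · exact hX
    · rcases Finset.mem_insert.mp ho with h | h
      · exact absurd h (by simp)
      · obtain ⟨j', hj', hjj⟩ := Finset.mem_image.mp h
        cases Option.some_injective _ hjj
        exact hA _ hj'
  · intro x
    rw [Finset.filter_insert]
    have himg : (s.image some).filter (fun o => x ∈ A' o)
        = (s.filter fun j => x ∈ A j).image some := by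
      rw [Finset.filter_image]
    by_cases hx : x ∈ X
    · rw [if_pos (show x ∈ A' none from hx), Finset.sum_insert
        (fun h => hnone (Finset.filter_subset _ _ h)), himg,
        Finset.sum_image (fun a _ b _ h => Option.some_injective _ h)]
      have h1 : ∑ j ∈ s.filter (fun j => x ∈ A j), w j = 1 := by
        rw [hw x, Set.indicator_of_mem hx]
      show (-1 : R) + ∑ j ∈ s.filter (fun j => x ∈ A j), w j = 0
      rw [h1]; ring
    · rw [if_neg (show ¬ x ∈ A' none from hx), himg,
        Finset.sum_image (fun a _ b _ h => Option.some_injective _ h)]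
      show ∑ j ∈ s.filter (fun j => x ∈ A j), w j = 0
      rw [hw x, Set.indicator_of_notMem hx]

lemma tensor : ∀ (n : ℕ) (Ω : Fin n → Type) (𝓑 : ∀ i : Fin n, Set (Set (Ω i)))
    (ν : ∀ i, Set (Ω i) → R),
    (∀ i, ∀ A ∈ 𝓑 i, ∀ B ∈ 𝓑 i, A ∩ B ∈ 𝓑 i) →
    (∀ i, ∀ A ∈ 𝓑 i, ∀ B ∈ 𝓑 i, A ∪ B ∈ 𝓑 i) →
    (∀ i, ∀ A ∈ 𝓑 i, ∀ B ∈ 𝓑 i, A \ B ∈ 𝓑 i) →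
    (∀ i, ∅ ∈ 𝓑 i) → (∀ i, ν i ∅ = 0) →
    (∀ i, ∀ X ∈ 𝓑 i, ∀ Y ∈ 𝓑 i, ν i (X ∪ Y) + ν i (X ∩ Y) = ν i X + ν i Y) →
    ∀ (ι : Type) (s : Finset ι) (c : ι → R) (A : ι → ∀ i, Set (Ω i)),
    (∀ j ∈ s, ∀ i, A j i ∈ 𝓑 i) →
    (∀ x : ∀ i, Ω i, ∑ j ∈ s, c j * ∏ i, (A j i).indicator (fun _ => (1:R)) (x i) = 0) →
    ∑ j ∈ s, c j * ∏ i, ν i (A j i) = 0 := by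
  intro n
  induction n with
  | zero =>
    intro Ω 𝓑 ν _ _ _ _ _ _ ι s c A hA h
    have := h (fun i => i.elim0)
    simpa using this
  | succ n IH =>
    intro Ω 𝓑 ν hi hu hd he h0 hadd ι s c A hA h
    classical
    have key := valuation_key (hi 0) (hu 0) (hd 0) (he 0) (h0 0) (hadd 0) s
        (fun j => A j 0) (fun j => c j * ∏ i : Fin n, ν i.succ (A j i.succ))
        (fun j hj => hA j hj 0) ?_
    · refine Eq.trans (Finset.sum_congr rfl fun j hj => ?_) key
      rw [Fin.prod_univ_succ]; ring
    · intro x₀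
      have IH' := IH (fun i => Ω i.succ) (fun i => 𝓑 i.succ) (fun i => ν i.succ)
          (fun i => hi i.succ) (fun i => hu i.succ) (fun i => hd i.succ)
          (fun i => he i.succ) (fun i => h0 i.succ) (fun i => hadd i.succ)
          ι s (fun j => c j * (A j 0).indicator (fun _ => (1:R)) x₀)
          (fun j i => A j i.succ) (fun j hj i => hA j hj i.succ) ?_
      · rw [Finset.sum_filter]
        refine Eq.trans (Finset.sum_congr rfl fun j hj => ?_) IH'
        simp only [Set.indicator_apply]
        split_ifs with hx <;> simp
      · intro y
        have hxy := h (Fin.cons x₀ y)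
        refine Eq.trans (Finset.sum_congr rfl fun j hj => ?_) hxy
        rw [Fin.prod_univ_succ]
        simp only [Fin.cons_zero, Fin.cons_succ]
        ring

lemma ind_inter {γ : Type} (X Y : Set γ) (x : γ) :
    (X ∩ Y).indicator (fun _ => (1:R)) x
      = X.indicator (fun _ => (1:R)) x * Y.indicator (fun _ => (1:R)) x := by
  by_cases h1 : x ∈ X <;> by_cases h2 : x ∈ Y <;>
    simp [Set.indicator_apply, h1, h2]

lemma ind_union {γ : Type} (X Y : Set γ) (x : γ) :
    (X ∪ Y).indicator (fun _ => (1:R)) x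
      = X.indicator (fun _ => (1:R)) x + Y.indicator (fun _ => (1:R)) x
        - X.indicator (fun _ => (1:R)) x * Y.indicator (fun _ => (1:R)) x := by
  by_cases h1 : x ∈ X <;> by_cases h2 : x ∈ Y <;>
    simp [Set.indicator_apply, h1, h2]

lemma ind_sdiff {γ : Type} (X Y : Set γ) (x : γ) :
    (X \ Y).indicator (fun _ => (1:R)) x
      = X.indicator (fun _ => (1:R)) x
        - X.indicator (fun _ => (1:R)) x * Y.indicator (fun _ => (1:R)) x := by
  by_cases h1 : x ∈ X <;> by_cases h2 : x ∈ Y <;>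
    simp [Set.indicator_apply, h1, h2]

lemma ind_pi {n : ℕ} {Ω : Fin n → Type} (A : ∀ i, Set (Ω i)) (x : ∀ i, Ω i) :
    (Set.univ.pi A).indicator (fun _ => (1:R)) x
      = ∏ i, (A i).indicator (fun _ => (1:R)) (x i) := by
  by_cases h : x ∈ Set.univ.pi A
  · rw [Set.indicator_of_mem h]
    rw [Set.mem_univ_pi] at h
    exact (Finset.prod_eq_one fun i _ => Set.indicator_of_mem (h i) _).symm
  · rw [Set.indicator_of_notMem h]
    rw [Set.mem_univ_pi] at h
    push_neg at h
    obtain ⟨i, hi⟩ := h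
    exact (Finset.prod_eq_zero (Finset.mem_univ i) (Set.indicator_of_notMem hi _)).symm

lemma cls_inter {α : Type} {K : Set (Set α)}
    (hki : ∀ A ∈ K, ∀ B ∈ K, A ∩ B ∈ K) :
    ∀ A ∈ K ∪ {∅}, ∀ B ∈ K ∪ {∅}, A ∩ B ∈ K ∪ {∅} := by
  rintro A (hA | rfl) B (hB | rfl)
  · exact Or.inl (hki A hA B hB)
  · rw [Set.inter_empty]; exact Or.inr rfl
  · rw [Set.empty_inter]; exact Or.inr rfl
  · rw [Set.empty_inter]; exact Or.inr rfl

lemma cls_union {α : Type} {K : Set (Set α)}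
    (hku : ∀ A ∈ K, ∀ B ∈ K, A ∪ B ∈ K) :
    ∀ A ∈ K ∪ {∅}, ∀ B ∈ K ∪ {∅}, A ∪ B ∈ K ∪ {∅} := by
  rintro A (hA | rfl) B (hB | rfl)
  · exact Or.inl (hku A hA B hB)
  · rw [Set.union_empty]; exact Or.inl hA
  · rw [Set.empty_union]; exact Or.inl hB
  · rw [Set.union_empty]; exact Or.inr rfl

lemma cls_sdiff {α : Type} {K : Set (Set α)}
    (hkd : ∀ A ∈ K, ∀ B ∈ K, A \ B ∈ K) :
    ∀ A ∈ K ∪ {∅}, ∀ B ∈ K ∪ {∅}, A \ B ∈ K ∪ {∅} := by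
  rintro A (hA | rfl) B (hB | rfl)
  · exact Or.inl (hkd A hA B hB)
  · rw [Set.diff_empty]; exact Or.inl hA
  · rw [Set.empty_diff]; exact Or.inr rfl
  · rw [Set.empty_diff]; exact Or.inr rfl

lemma val_ext {α : Type} (K : Set (Set α)) (ν : Set α → R) (h0 : ν ∅ = 0)
    (hadd : ∀ X ∈ K, ∀ Y ∈ K, ν (X ∪ Y) + ν (X ∩ Y) = ν X + ν Y) :
    ∀ X ∈ K ∪ {∅}, ∀ Y ∈ K ∪ {∅}, ν (X ∪ Y) + ν (X ∩ Y) = ν X + ν Y := by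
  rintro X (hX | rfl) Y (hY | rfl)
  · exact hadd X hX Y hY
  · rw [Set.union_empty, Set.inter_empty, h0]
  · rw [Set.empty_union, Set.empty_inter, h0]; ring
  · rw [Set.union_empty, Set.inter_empty, h0]

end Aux

section PiMem
variable {n : ℕ} {Ω : Fin n → Type}

lemma mem_pi_update_iff (B : ∀ i, Set (Ω i)) (i : Fin n) (C : Set (Ω i)) (x : ∀ j, Ω j) :
    x ∈ Set.univ.pi (Function.update B i C) ↔ x i ∈ C ∧ ∀ j, j ≠ i → x j ∈ B j := by
  rw [Set.mem_univ_pi]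
  constructor
  · intro h
    refine ⟨?_, fun j hj => ?_⟩
    · have hh := h i; rwa [Function.update_self] at hh
    · have hh := h j; rwa [Function.update_of_ne hj] at hh
  · rintro ⟨h1, h2⟩ j
    rcases eq_or_ne j i with rfl | hj
    · rwa [Function.update_self]
    · rw [Function.update_of_ne hj]; exact h2 j hj

lemma pi_update_inter (B : ∀ i, Set (Ω i)) (i : Fin n) (C C' : Set (Ω i)) :
    Set.univ.pi (Function.update B i (C ∩ C'))
      = Set.univ.pi (Function.update B i C) ∩ Set.univ.pi (Function.update B i C') := by
  ext x
  simp only [mem_pi_update_iff, Set.mem_inter_iff]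
  tauto

lemma pi_update_union (B : ∀ i, Set (Ω i)) (i : Fin n) (C C' : Set (Ω i)) :
    Set.univ.pi (Function.update B i (C ∪ C'))
      = Set.univ.pi (Function.update B i C) ∪ Set.univ.pi (Function.update B i C') := by
  ext x
  simp only [mem_pi_update_iff, Set.mem_union]
  tauto

lemma pi_update_sdiff (B : ∀ i, Set (Ω i)) (i : Fin n) (C C' : Set (Ω i)) :
    Set.univ.pi (Function.update B i (C \ C'))
      = Set.univ.pi (Function.update B i C) \ Set.univ.pi (Function.update B i C') := by
  ext x
  simp only [mem_pi_update_iff, Set.mem_diff]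
  tauto

lemma pi_mem (L : ∀ i, Set (Set (Ω i))) :
    ∀ (k : ℕ) (B : ∀ i, Set (Ω i)),
      (∀ i : Fin n, (i : ℕ) < k → RelBool (L i) (B i)) →
      (∀ i : Fin n, k ≤ (i : ℕ) → B i ∈ L i) →
      RelBool (prodGenClass L) (Set.univ.pi B) := by
  intro k
  induction k with
  | zero =>
    intro B _ h2
    exact RelBool.base ⟨B, fun i => h2 i (Nat.zero_le _), rfl⟩
  | succ k IHk =>
    intro B h1 h2
    by_cases hk : k < n
    · set i₀ : Fin n := ⟨k, hk⟩ with hi₀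
      have hval : (i₀ : ℕ) = k := rfl
      have key : ∀ C : Set (Ω i₀), RelBool (L i₀) C →
          RelBool (prodGenClass L) (Set.univ.pi (Function.update B i₀ C)) := by
        intro C hC
        induction hC with
        | @base A hAL =>
          apply IHk
          · intro i hi
            have hne : i ≠ i₀ := by rintro rfl; omega
            rw [Function.update_of_ne hne]
            exact h1 i (Nat.lt_succ_of_lt hi)
          · intro i hi
            rcases eq_or_ne i i₀ with rfl | hne
            · rwa [Function.update_self]
            · rw [Function.update_of_ne hne]
              refine h2 i ?_
              have hik : (i : ℕ) ≠ k := fun h => hne (Fin.ext (h.trans hval.symm))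
              omega
        | @inter X Y hX hY ihX ihY => rw [pi_update_inter]; exact RelBool.inter ihX ihY
        | @union X Y hX hY ihX ihY => rw [pi_update_union]; exact RelBool.union ihX ihY
        | @sdiff X Y hX hY ihX ihY => rw [pi_update_sdiff]; exact RelBool.sdiff ihX ihY
      have hB0 : RelBool (L i₀) (B i₀) := h1 i₀ (by omega)
      have hfin := key (B i₀) hB0
      rwa [Function.update_eq_self] at hfin
    · apply IHk B
      · intro i hi
        exact h1 i (Nat.lt_succ_of_lt hi)
      · intro i hi
        exact absurd i.isLt (by omega)

end PiMem

section GR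
variable {R : Type} [CommRing R] {n : ℕ} {Ω : Fin n → Type}

noncomputable def WInd (x : ∀ i, Ω i) : (∀ i, Set (Ω i)) → R :=
  fun A => ∏ i, (A i).indicator (fun _ => (1:R)) (x i)

def WVal (ν : ∀ i, Set (Ω i) → R) : (∀ i, Set (Ω i)) → R :=
  fun A => ∏ i, ν i (A i)

def piInt : (∀ i, Set (Ω i)) → (∀ i, Set (Ω i)) → (∀ i, Set (Ω i)) :=
  fun A B i => A i ∩ B i

def GRep (L : ∀ i, Set (Set (Ω i))) (X : Set (∀ i, Ω i))
    (l : (∀ i, Set (Ω i)) →₀ R) : Prop :=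
  (∀ A ∈ l.support, ∀ i, RelBool (L i) (A i)) ∧
  ∀ x : ∀ i, Ω i, X.indicator (fun _ => (1:R)) x = l.sum fun A r => r * WInd x A

lemma WInd_piInt (x : ∀ i, Ω i) (A B : ∀ i, Set (Ω i)) :
    WInd (R := R) x (piInt A B) = WInd (R := R) x A * WInd (R := R) x B := by
  rw [WInd, WInd, WInd, ← Finset.prod_mul_distrib]
  exact Finset.prod_congr rfl fun i _ => ind_inter _ _ _

lemma GRep_pi (L : ∀ i, Set (Set (Ω i))) (B : ∀ i, Set (Ω i))
    (hB : ∀ i, RelBool (L i) (B i)) :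
    GRep (R := R) L (Set.univ.pi B) (Finsupp.single B 1) := by
  constructor
  · intro A hA i
    have h := Finsupp.support_single_subset hA
    rw [Finset.mem_singleton] at h
    rw [h]; exact hB i
  · intro x
    rw [linG_single (WInd x) B 1, one_mul, ind_pi]
    rfl

lemma GRep_inter {L : ∀ i, Set (Set (Ω i))} {X Y : Set (∀ i, Ω i)}
    {l l' : (∀ i, Set (Ω i)) →₀ R}
    (hX : GRep L X l) (hY : GRep L Y l') :
    GRep L (X ∩ Y) (convG piInt l l') := by
  constructor
  · intro C hC i
    obtain ⟨A, hA, B, hB, rfl⟩ := convG_support piInt l l' C hC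
    exact RelBool.inter (hX.1 A hA i) (hY.1 B hB i)
  · intro x
    rw [ind_inter, hX.2 x, hY.2 x]
    exact (linG_conv (WInd x) piInt (WInd_piInt x) l l').symm

lemma GRep_union {L : ∀ i, Set (Set (Ω i))} {X Y : Set (∀ i, Ω i)}
    {l l' : (∀ i, Set (Ω i)) →₀ R}
    (hX : GRep L X l) (hY : GRep L Y l') :
    GRep L (X ∪ Y) (l + l' - convG piInt l l') := by
  constructor
  · intro C hC i
    have h := Finsupp.support_sub (f := l + l') (g := convG piInt l l') hC
    rcases Finset.mem_union.mp h with h1 | h1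
    · rcases Finset.mem_union.mp (Finsupp.support_add h1) with h2 | h2
      · exact hX.1 C h2 i
      · exact hY.1 C h2 i
    · obtain ⟨A, hA, B, hB, rfl⟩ := convG_support piInt l l' C h1
      exact RelBool.inter (hX.1 A hA i) (hY.1 B hB i)
  · intro x
    rw [ind_union, hX.2 x, hY.2 x, linG_sub (WInd x), linG_add (WInd x),
      linG_conv (WInd x) piInt (WInd_piInt x)]

lemma GRep_sdiff {L : ∀ i, Set (Set (Ω i))} {X Y : Set (∀ i, Ω i)}
    {l l' : (∀ i, Set (Ω i)) →₀ R}
    (hX : GRep L X l) (hY : GRep L Y l') :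
    GRep L (X \ Y) (l - convG piInt l l') := by
  constructor
  · intro C hC i
    have h := Finsupp.support_sub (f := l) (g := convG piInt l l') hC
    rcases Finset.mem_union.mp h with h1 | h1
    · exact hX.1 C h1 i
    · obtain ⟨A, hA, B, hB, rfl⟩ := convG_support piInt l l' C h1
      exact RelBool.inter (hX.1 A hA i) (hY.1 B hB i)
  · intro x
    rw [ind_sdiff, hX.2 x, hY.2 x, linG_sub (WInd x),
      linG_conv (WInd x) piInt (WInd_piInt x)]

lemma GRep_empty (L : ∀ i, Set (Set (Ω i))) : GRep (R := R) L ∅ 0 := by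
  constructor
  · intro A hA
    simp at hA
  · intro x
    simp [Finsupp.sum_zero_index]

lemma rep_exists (L : ∀ i, Set (Set (Ω i))) (X : Set (∀ i, Ω i))
    (hX : RelBool (prodGenClass L) X) : ∃ l, GRep (R := R) L X l := by
  induction hX with
  | @base P hP =>
    obtain ⟨A, hAL, rfl⟩ := hP
    exact ⟨Finsupp.single A 1, GRep_pi L A (fun i => RelBool.base (hAL i))⟩
  | @inter X Y hX hY ihX ihY =>
    obtain ⟨l, hl⟩ := ihX
    obtain ⟨l', hl'⟩ := ihY
    exact ⟨_, GRep_inter hl hl'⟩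
  | @union X Y hX hY ihX ihY =>
    obtain ⟨l, hl⟩ := ihX
    obtain ⟨l', hl'⟩ := ihY
    exact ⟨_, GRep_union hl hl'⟩
  | @sdiff X Y hX hY ihX ihY =>
    obtain ⟨l, hl⟩ := ihX
    obtain ⟨l', hl'⟩ := ihY
    exact ⟨_, GRep_sdiff hl hl'⟩

lemma val_congr (L : ∀ i, Set (Set (Ω i))) (ν : ∀ i, Set (Ω i) → R)
    (hν : ∀ i, IsValuation {A | RelBool (L i) A} (ν i))
    (X : Set (∀ i, Ω i)) (l l' : (∀ i, Set (Ω i)) →₀ R)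
    (h : GRep L X l) (h' : GRep L X l') :
    l.sum (fun A r => r * WVal ν A) = l'.sum (fun A r => r * WVal ν A) := by
  classical
  have key := tensor n Ω (fun i => {A | RelBool (L i) A} ∪ {∅}) ν
      (fun i => cls_inter (fun A hA B hB => RelBool.inter hA hB))
      (fun i => cls_union (fun A hA B hB => RelBool.union hA hB))
      (fun i => cls_sdiff (fun A hA B hB => RelBool.sdiff hA hB))
      (fun i => Or.inr rfl)
      (fun i => (hν i).1)
      (fun i => val_ext _ (ν i) (hν i).1 (hν i).2)
      ((i : Fin n) → Set (Ω i)) (l - l').support (⇑(l - l')) id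
      ?_ ?_
  · have hz : (l - l').sum (fun A r => r * WVal ν A) = 0 := key
    rw [linG_sub (WVal ν)] at hz
    exact sub_eq_zero.mp hz
  · intro A hA i
    have h2 := Finsupp.support_sub (f := l) (g := l') hA
    rcases Finset.mem_union.mp h2 with h1 | h1
    · exact Or.inl (h.1 A h1 i)
    · exact Or.inl (h'.1 A h1 i)
  · intro x
    have hz : (l - l').sum (fun A r => r * WInd x A) = 0 := by
      rw [linG_sub (WInd x), ← h.2 x, ← h'.2 x, sub_self]
    exact hz

end GR

/-- Given valuations `νᵢ` on the relative Boolean algebras `𝓑ᵢ` generated by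
intersectional classes `Lᵢ` of non-empty sets `Ωᵢ`, there is a unique valuation
`μ` on the product relative Boolean algebra with `μ(∏ Bᵢ) = ∏ νᵢ(Bᵢ)` for all
`Bᵢ ∈ 𝓑ᵢ`. -/
theorem stmt3 {n : ℕ} {Ω : Fin n → Type} {R : Type} [CommRing R]
    (hΩ : ∀ i, Nonempty (Ω i))
    (L : ∀ i, Set (Set (Ω i)))
    (hL : ∀ i, ∀ A ∈ L i, ∀ B ∈ L i, A ∩ B ∈ L i)
    (ν : ∀ i, Set (Ω i) → R)
    (hν : ∀ i, IsValuation {A | RelBool (L i) A} (ν i)) :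
    ∃ μ : Set (∀ i, Ω i) → R,
      (IsValuation {X | RelBool (prodGenClass L) X} μ ∧
        ∀ B : ∀ i, Set (Ω i), (∀ i, RelBool (L i) (B i)) →
          μ (Set.univ.pi B) = ∏ i, ν i (B i)) ∧
      ∀ μ' : Set (∀ i, Ω i) → R,
        (IsValuation {X | RelBool (prodGenClass L) X} μ' ∧
          ∀ B : ∀ i, Set (Ω i), (∀ i, RelBool (L i) (B i)) →
            μ' (Set.univ.pi B) = ∏ i, ν i (B i)) →
        ∀ X : Set (∀ i, Ω i), RelBool (prodGenClass L) X → μ' X = μ X := by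
  classical
  set valF : ((∀ i, Set (Ω i)) →₀ R) → R := fun l => l.sum fun A r => r * WVal ν A
    with hvalF
  set μ : Set (∀ i, Ω i) → R :=
    fun X => if h : ∃ l, GRep (R := R) L X l then valF h.choose else 0 with hμ
  have hmu : ∀ (X : Set (∀ i, Ω i)) (l : (∀ i, Set (Ω i)) →₀ R),
      GRep (R := R) L X l → μ X = valF l := by
    intro X l hl
    have hex : ∃ l, GRep (R := R) L X l := ⟨l, hl⟩
    rw [hμ]
    simp only
    rw [dif_pos hex]
    exact val_congr L ν hν X _ l hex.choose_spec hl
  refine ⟨μ, ⟨⟨?_, ?_⟩, ?_⟩, ?_⟩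
  · rw [hmu ∅ 0 (GRep_empty L), hvalF]
    simp [Finsupp.sum_zero_index]
  · intro X hX Y hY
    obtain ⟨l, hl⟩ := rep_exists (R := R) L X hX
    obtain ⟨l', hl'⟩ := rep_exists (R := R) L Y hY
    rw [hmu _ _ (GRep_union hl hl'), hmu _ _ (GRep_inter hl hl'),
      hmu _ _ hl, hmu _ _ hl', hvalF]
    simp only
    rw [linG_sub (WVal ν), linG_add (WVal ν)]
    ring
  · intro B hB
    rw [hmu _ _ (GRep_pi L B hB), hvalF]
    simp only
    rw [linG_single (WVal ν) B 1, one_mul]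
    rfl
  · rintro μ' ⟨⟨hμ'0, hμ'add⟩, hμ'prod⟩ X hX
    obtain ⟨l, hl⟩ := rep_exists (R := R) L X hX
    rw [hmu X l hl]
    have hpi : ∀ A ∈ l.support,
        Set.univ.pi A ∈ ({X | RelBool (prodGenClass L) X} ∪ {∅} : Set (Set (∀ i, Ω i))) := by
      intro A hA
      exact Or.inl (pi_mem L n A (fun i _ => hl.1 A hA i)
        (fun i hi => absurd i.isLt (by omega)))
    have hXmem : X ∈ ({X | RelBool (prodGenClass L) X} ∪ {∅} : Set (Set (∀ i, Ω i))) :=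
      Or.inl hX
    have key := valuation_key' (R := R) (ν := μ')
        (cls_inter (fun A hA B hB => RelBool.inter hA hB))
        (cls_union (fun A hA B hB => RelBool.union hA hB))
        (cls_sdiff (fun A hA B hB => RelBool.sdiff hA hB))
        (Or.inr rfl) hμ'0
        (val_ext _ μ' hμ'0 hμ'add)
        l.support (fun A => Set.univ.pi A) (⇑l) X hXmem hpi ?_
    · calc μ' X = ∑ A ∈ l.support, l A * μ' (Set.univ.pi A) := key.symm
        _ = ∑ A ∈ l.support, l A * WVal ν A := by
            refine Finset.sum_congr rfl fun A hA => ?_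
            rw [hμ'prod A (fun i => hl.1 A hA i)]
            rfl
        _ = valF l := rfl
    · intro x
      rw [Finset.sum_filter, hl.2 x, Finsupp.sum]
      refine Finset.sum_congr rfl fun A hA => ?_
      by_cases hxA : x ∈ Set.univ.pi A
      · rw [if_pos hxA]
        have hw1 : WInd (R := R) x A = 1 := by
          show (∏ i, (A i).indicator (fun _ => (1:R)) (x i)) = 1
          rw [← ind_pi]; exact Set.indicator_of_mem hxA _
        rw [hw1, mul_one]
      · rw [if_neg hxA]
        have hw0 : WInd (R := R) x A = 0 := by
          show (∏ i, (A i).indicator (fun _ => (1:R)) (x i)) = 0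
          rw [← ind_pi]; exact Set.indicator_of_notMem hxA _
        rw [hw0, mul_zero]
end

section
/- Let 𝓐 be a finite arrangement of subsets of a set Ω, let L(𝓐) be the poset (under inclusion) of all non-empty intersections of members of 𝓐 together with Ω itself, with Möbius function μ, and let ν be a valuation defined on a relative Boolean algebra containing all members of L(𝓐). Then the indicator function of the complement Ω − ⋃_{A∈𝓐} A equals ∑_{X ∈ L(𝓐)} μ(X,Ω)·1_X, and consequently ν(Ω − ⋃_{A∈𝓐} A) = ∑_{X ∈ L(𝓐)} μ(X,Ω) ν(X). -/
/-!
For `ω ∈ Ω` let `M` be the intersection of the members of `𝓐` containing `ω`. Then `M ∈ L(𝓐)`,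
and a member `X` of `L(𝓐)` contains `ω` iff `X ⊇ M`, so `∑_{X ∈ L} μ(X,Ω) 1_X(ω)` is
`∑_{X ⊇ M} μ(X,Ω)`, which the defining recursion of `μ` makes `1` if `M = Ω` and `0` otherwise;
and `M = Ω` exactly when `ω` lies in no member of `𝓐`, since these are proper subsets.

For the valuation, every set involved is a union of cells of `𝓐` (the points lying in exactly
the members of a given `T ⊆ 𝓐`). The cells lie in `𝓑` and partition `Ω`, so `ν` is additive
over them, and on a nonempty cell both sides reduce to the indicator identity at any of its points.
-/

namespace Arrangement

open Classical

variable {Ω : Type*} (𝓐 : Finset (Set Ω))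

noncomputable def containing (ω : Ω) : Finset (Set Ω) := 𝓐.filter (ω ∈ ·)

def cell (T : Finset (Set Ω)) : Set Ω := containing 𝓐 ⁻¹' {T}

-- The members of the intersection poset `L(𝓐)`.
def IsFlat (X : Set Ω) : Prop :=
  X = Set.univ ∨ ∃ S ⊆ 𝓐, S.Nonempty ∧ X = ⋂₀ (↑S : Set (Set Ω)) ∧ X.Nonempty

def IsCellUnion (X : Set Ω) : Prop :=
  ∀ ⦃x y⦄, containing 𝓐 x = containing 𝓐 y → x ∈ X → y ∈ X

variable {𝓐}

lemma mem_containing {ω : Ω} {A : Set Ω} : A ∈ containing 𝓐 ω ↔ A ∈ 𝓐 ∧ ω ∈ A :=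
  Finset.mem_filter

lemma containing_subset (ω : Ω) : containing 𝓐 ω ⊆ 𝓐 := Finset.filter_subset _ _

lemma mem_compl_biUnion_iff {ω : Ω} :
    ω ∈ Set.univ \ ⋃ A ∈ 𝓐, A ↔ containing 𝓐 ω = ∅ := by
  simp [containing, Finset.filter_eq_empty_iff]

lemma mem_sInter_iff_subset_containing {S : Finset (Set Ω)} (hS : S ⊆ 𝓐) {ω : Ω} :
    ω ∈ ⋂₀ (↑S : Set (Set Ω)) ↔ S ⊆ containing 𝓐 ω := by
  simp only [Set.mem_sInter, Finset.mem_coe, Finset.subset_iff, mem_containing]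
  exact forall₂_congr fun A hA => (and_iff_right (hS hA)).symm

lemma mem_sInter_containing (ω : Ω) : ω ∈ ⋂₀ (↑(containing 𝓐 ω) : Set (Set Ω)) :=
  (mem_sInter_iff_subset_containing (containing_subset ω)).2 subset_rfl

lemma isFlat_sInter_containing (ω : Ω) : IsFlat 𝓐 (⋂₀ ↑(containing 𝓐 ω)) := by
  rcases (containing 𝓐 ω).eq_empty_or_nonempty with h | h
  · exact .inl (by simp [h])
  · exact .inr ⟨_, containing_subset ω, h, rfl, _, mem_sInter_containing ω⟩

lemma IsFlat.exists_eq_sInter {X : Set Ω} (hX : IsFlat 𝓐 X) :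
    ∃ S ⊆ 𝓐, X = ⋂₀ (↑S : Set (Set Ω)) := by
  rcases hX with rfl | ⟨S, hS, -, rfl, -⟩
  · exact ⟨∅, Finset.empty_subset _, by simp⟩
  · exact ⟨S, hS, rfl⟩

lemma IsFlat.mem_iff_sInter_containing_subset {X : Set Ω} (hX : IsFlat 𝓐 X) {ω : Ω} :
    ω ∈ X ↔ ⋂₀ ↑(containing 𝓐 ω) ⊆ X := by
  obtain ⟨S, hS, rfl⟩ := hX.exists_eq_sInter
  refine ⟨fun h => Set.sInter_subset_sInter ?_, fun h => h (mem_sInter_containing ω)⟩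
  exact Finset.coe_subset.2 ((mem_sInter_iff_subset_containing hS).1 h)

lemma IsFlat.isCellUnion {X : Set Ω} (hX : IsFlat 𝓐 X) : IsCellUnion 𝓐 X := by
  intro x y hxy hx
  rwa [hX.mem_iff_sInter_containing_subset, ← hxy, ← hX.mem_iff_sInter_containing_subset]

lemma isCellUnion_compl_biUnion : IsCellUnion 𝓐 (Set.univ \ ⋃ A ∈ 𝓐, A) := by
  intro x y hxy
  rw [mem_compl_biUnion_iff, mem_compl_biUnion_iff, hxy]
  exact id

lemma sInter_containing_eq_univ_iff (hproper : ∀ A ∈ 𝓐, A ≠ Set.univ) {ω : Ω} :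
    ⋂₀ (↑(containing 𝓐 ω) : Set (Set Ω)) = Set.univ ↔ containing 𝓐 ω = ∅ := by
  refine ⟨fun h => Finset.eq_empty_of_forall_notMem fun A hA => ?_, fun h => by simp [h]⟩
  refine hproper A (mem_containing.1 hA).1 (Set.univ_subset_iff.1 ?_)
  exact h ▸ Set.sInter_subset_of_mem (Finset.mem_coe.2 hA)

theorem indicator_compl_biUnion_eq_sum_moebius (hproper : ∀ A ∈ 𝓐, A ≠ Set.univ)
    {L : Finset (Set Ω)} (hL : ∀ X, X ∈ L ↔ IsFlat 𝓐 X) {μ : Set Ω → ℤ}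
    (hμ : ∀ X ∈ L, (∑ Z ∈ L.filter (fun Z => X ⊆ Z), μ Z) = if X = Set.univ then 1 else 0)
    (ω : Ω) :
    (if ω ∈ Set.univ \ ⋃ A ∈ 𝓐, A then (1 : ℤ) else 0) =
      ∑ X ∈ L, μ X * (if ω ∈ X then 1 else 0) := by
  set M := ⋂₀ (↑(containing 𝓐 ω) : Set (Set Ω))
  calc (if ω ∈ Set.univ \ ⋃ A ∈ 𝓐, A then (1 : ℤ) else 0)
      = if M = Set.univ then 1 else 0 := by
        simp only [mem_compl_biUnion_iff, M, sInter_containing_eq_univ_iff hproper]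
    _ = ∑ Z ∈ L.filter (fun Z => M ⊆ Z), μ Z := (hμ M ((hL M).2 (isFlat_sInter_containing ω))).symm
    _ = ∑ X ∈ L, μ X * (if ω ∈ X then 1 else 0) := by
        rw [Finset.sum_filter]
        refine Finset.sum_congr rfl fun X hX => ?_
        rw [mul_boole, ((hL X).1 hX).mem_iff_sInter_containing_subset]

lemma cell_eq_sdiff {T : Finset (Set Ω)} (hT : T ⊆ 𝓐) :
    cell 𝓐 T = (⋂ A ∈ T, A) \ ⋃ A ∈ 𝓐 \ T, A := by
  ext ω
  simp only [cell, Set.mem_preimage, Set.mem_singleton_iff, Set.mem_sdiff, Set.mem_iInter,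
    Set.mem_iUnion, Finset.mem_sdiff, exists_prop, not_exists, not_and, Finset.ext_iff,
    mem_containing]
  constructor
  · intro h
    exact ⟨fun A hA => ((h A).2 hA).2, fun A ⟨hA, hAT⟩ hωA => hAT ((h A).1 ⟨hA, hωA⟩)⟩
  · rintro ⟨hin, hout⟩ A
    exact ⟨fun ⟨hA, hωA⟩ => by_contra fun hAT => hout A ⟨hA, hAT⟩ hωA,
      fun hAT => ⟨hT hAT, hin A hAT⟩⟩

lemma cell_mem {𝓑 : Set (Set Ω)} (h𝓑 : MeasureTheory.IsSetAlgebra 𝓑) (h𝓐 : ∀ A ∈ 𝓐, A ∈ 𝓑)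
    {T : Finset (Set Ω)} (hT : T ⊆ 𝓐) : cell 𝓐 T ∈ 𝓑 := by
  rw [cell_eq_sdiff hT]
  exact h𝓑.sdiff_mem (h𝓑.biInter_mem T fun A hA => h𝓐 A (hT hA))
    (h𝓑.biUnion_mem _ fun A hA => h𝓐 A (Finset.mem_sdiff.1 hA).1)

lemma biUnion_powerset_cell : ⋃ T ∈ 𝓐.powerset, cell 𝓐 T = Set.univ :=
  Set.eq_univ_of_forall fun ω =>
    Set.mem_biUnion (Finset.mem_powerset.2 (containing_subset ω)) rfl

lemma pairwiseDisjoint_cell (S : Set (Finset (Set Ω))) : S.PairwiseDisjoint (cell 𝓐) :=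
  Set.pairwiseDisjoint_fiber _ _

lemma IsCellUnion.cell_inter {X : Set Ω} (hX : IsCellUnion 𝓐 X) {T : Finset (Set Ω)} {ω : Ω}
    (hω : ω ∈ cell 𝓐 T) : cell 𝓐 T ∩ X = if ω ∈ X then cell 𝓐 T else ∅ := by
  split_ifs with h
  · exact Set.inter_eq_left.2 fun y hy => hX (hω.trans hy.symm) h
  · exact Set.eq_empty_of_forall_notMem fun y hy => h (hX (hy.1.trans hω.symm) hy.2)

end Arrangement

namespace IsValuation

open Arrangement

variable {Ω R : Type} [CommRing R] {𝓑 : Set (Set Ω)} {ν : Set Ω → R}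

lemma map_biUnion (hν : IsValuation 𝓑 ν) (h𝓑 : MeasureTheory.IsSetRing 𝓑) {ι : Type*}
    {s : Finset ι} {f : ι → Set Ω} (hf : ∀ i ∈ s, f i ∈ 𝓑)
    (hdisj : (s : Set ι).PairwiseDisjoint f) : ν (⋃ i ∈ s, f i) = ∑ i ∈ s, ν (f i) := by
  classical
  induction s using Finset.induction_on with
  | empty => simp [hν.1]
  | insert a s ha ih =>
    rw [Finset.coe_insert, Set.pairwiseDisjoint_insert] at hdisj
    have hs : ⋃ i ∈ s, f i ∈ 𝓑 :=
      h𝓑.biUnion_mem s fun i hi => hf i (Finset.mem_insert_of_mem hi)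
    have hdisj_a : Disjoint (f a) (⋃ i ∈ s, f i) :=
      Set.disjoint_iUnion₂_right.2 fun i hi => hdisj.2 i hi (ne_of_mem_of_not_mem hi ha).symm
    have hadd := hν.2 _ (hf a (Finset.mem_insert_self a s)) _ hs
    rw [hdisj_a.inter_eq, hν.1, add_zero] at hadd
    rw [Finset.set_biUnion_insert, hadd, Finset.sum_insert ha,
      ih (fun i hi => hf i (Finset.mem_insert_of_mem hi)) hdisj.1]

lemma eq_sum_inter_cell (hν : IsValuation 𝓑 ν) (h𝓑 : MeasureTheory.IsSetAlgebra 𝓑)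
    {𝓐 : Finset (Set Ω)} (h𝓐 : ∀ A ∈ 𝓐, A ∈ 𝓑) {Z : Set Ω} (hZ : Z ∈ 𝓑) :
    ν Z = ∑ T ∈ 𝓐.powerset, ν (cell 𝓐 T ∩ Z) := by
  conv_lhs => rw [← Set.univ_inter Z, ← biUnion_powerset_cell (𝓐 := 𝓐), Set.iUnion₂_inter]
  refine hν.map_biUnion h𝓑.isSetRing (fun T hT => h𝓑.inter_mem ?_ hZ) ?_
  · exact cell_mem h𝓑 h𝓐 (Finset.mem_powerset.1 hT)
  · exact (pairwiseDisjoint_cell _).mono fun T => Set.inter_subset_left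

lemma map_cell_inter (hν : IsValuation 𝓑 ν) {𝓐 : Finset (Set Ω)} {X : Set Ω}
    (hX : IsCellUnion 𝓐 X) {T : Finset (Set Ω)} {ω : Ω} (hω : ω ∈ cell 𝓐 T) :
    ν (cell 𝓐 T ∩ X) = ((X.indicator (1 : Ω → ℤ) ω : ℤ) : R) * ν (cell 𝓐 T) := by
  classical
  rw [hX.cell_inter hω, Set.indicator_apply]
  split_ifs <;> simp [hν.1]

theorem map_eq_sum_of_indicator_eq (hν : IsValuation 𝓑 ν) (h𝓑 : MeasureTheory.IsSetAlgebra 𝓑)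
    {𝓐 : Finset (Set Ω)} (h𝓐 : ∀ A ∈ 𝓐, A ∈ 𝓑) {Y : Set Ω} (hY𝓑 : Y ∈ 𝓑)
    (hY : IsCellUnion 𝓐 Y) {ι : Type*} {s : Finset ι} {X : ι → Set Ω}
    (hX𝓑 : ∀ i ∈ s, X i ∈ 𝓑) (hX : ∀ i ∈ s, IsCellUnion 𝓐 (X i)) (c : ι → ℤ)
    (h : Y.indicator (1 : Ω → ℤ) = ∑ i ∈ s, c i • (X i).indicator 1) :
    ν Y = ∑ i ∈ s, (c i : R) * ν (X i) := by
  have hXsum : ∑ i ∈ s, (c i : R) * ν (X i) =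
      ∑ i ∈ s, ∑ T ∈ 𝓐.powerset, (c i : R) * ν (cell 𝓐 T ∩ X i) :=
    Finset.sum_congr rfl fun i hi => by
      rw [hν.eq_sum_inter_cell h𝓑 h𝓐 (hX𝓑 i hi), Finset.mul_sum]
  rw [hXsum, Finset.sum_comm, hν.eq_sum_inter_cell h𝓑 h𝓐 hY𝓑]
  refine Finset.sum_congr rfl fun T _ => ?_
  rcases (cell 𝓐 T).eq_empty_or_nonempty with hT | ⟨ω, hω⟩
  · simp [hT, hν.1]
  rw [hν.map_cell_inter hY hω, congrFun h ω, Finset.sum_apply, Int.cast_sum, Finset.sum_mul]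
  refine Finset.sum_congr rfl fun i hi => ?_
  rw [hν.map_cell_inter (hX i hi) hω, Pi.smul_apply, smul_eq_mul, Int.cast_mul, mul_assoc]

end IsValuation

open Classical in
theorem stmt6_general {Ω R : Type} [CommRing R] (𝓐 : Finset (Set Ω))
    (hproper : ∀ A ∈ 𝓐, A ≠ Set.univ)
    (L : Finset (Set Ω))
    (hLdef : ∀ X : Set Ω, X ∈ L ↔
      (X = Set.univ ∨ ∃ S ⊆ 𝓐, S.Nonempty ∧ X = ⋂₀ (↑S : Set (Set Ω)) ∧ X.Nonempty))
    (μ : Set Ω → ℤ)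
    (hμ : ∀ X ∈ L, (∑ Z ∈ L.filter (fun Z => X ⊆ Z), μ Z) =
      if X = Set.univ then 1 else 0)
    (𝓑 : Set (Set Ω))
    (h𝓑univ : Set.univ ∈ 𝓑)
    (h𝓑L : ∀ X ∈ L, X ∈ 𝓑) (h𝓑A : ∀ A ∈ 𝓐, A ∈ 𝓑)
    (h𝓑union : ∀ X ∈ 𝓑, ∀ Y ∈ 𝓑, X ∪ Y ∈ 𝓑)
    (h𝓑sdiff : ∀ X ∈ 𝓑, ∀ Y ∈ 𝓑, X \ Y ∈ 𝓑)
    (ν : Set Ω → R) (hν : IsValuation 𝓑 ν) :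
    (∀ ω : Ω,
      (if ω ∈ Set.univ \ ⋃ A ∈ 𝓐, A then (1 : ℤ) else 0) =
        ∑ X ∈ L, μ X * (if ω ∈ X then 1 else 0)) ∧
    ν (Set.univ \ ⋃ A ∈ 𝓐, A) = ∑ X ∈ L, (μ X : R) * ν X := by
  have h𝓑 : MeasureTheory.IsSetAlgebra 𝓑 :=
    { empty_mem := by simpa using h𝓑sdiff _ h𝓑univ _ h𝓑univ
      compl_mem := fun X hX => by simpa [Set.compl_eq_univ_sdiff] using h𝓑sdiff _ h𝓑univ _ hX
      union_mem := fun X Y hX hY => h𝓑union X hX Y hY }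
  have hind := Arrangement.indicator_compl_biUnion_eq_sum_moebius hproper hLdef hμ
  refine ⟨hind, hν.map_eq_sum_of_indicator_eq h𝓑 h𝓑A ?_ Arrangement.isCellUnion_compl_biUnion
    h𝓑L (fun X hX => Arrangement.IsFlat.isCellUnion ((hLdef X).1 hX)) μ ?_⟩
  · exact h𝓑.sdiff_mem h𝓑.univ_mem (h𝓑.biUnion_mem 𝓐 h𝓑A)
  · ext ω
    simpa [Set.indicator_apply] using hind ω

open Classical in
/-- Let `𝓐` be a finite arrangement of proper subsets of `Ω`, `L` its semilattice
of non-empty intersections together with `Ω` itself, and `μ X = μ(X, Ω)` the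
Möbius function of the poset `L` (characterized by the defining recursion).
Then the indicator of the complement `Ω \ ⋃ 𝓐` equals `∑_{X ∈ L} μ(X,Ω) 1_X`,
and consequently any valuation `ν` defined on a relative Boolean algebra `𝓑`
containing `L` and the members of `𝓐` satisfies
`ν(Ω \ ⋃ 𝓐) = ∑_{X ∈ L} μ(X,Ω) ν(X)`. -/
theorem stmt6 {Ω R : Type} [CommRing R] (𝓐 : Finset (Set Ω))
    (hproper : ∀ A ∈ 𝓐, A ≠ Set.univ)
    (L : Finset (Set Ω))
    (hLdef : ∀ X : Set Ω, X ∈ L ↔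
      (X = Set.univ ∨ ∃ S ⊆ 𝓐, S.Nonempty ∧ X = ⋂₀ (↑S : Set (Set Ω)) ∧ X.Nonempty))
    (μ : Set Ω → ℤ)
    (hμ : ∀ X ∈ L, (∑ Z ∈ L.filter (fun Z => X ⊆ Z), μ Z) =
      if X = Set.univ then 1 else 0)
    (𝓑 : Set (Set Ω))
    (h𝓑univ : Set.univ ∈ 𝓑)
    (h𝓑L : ∀ X ∈ L, X ∈ 𝓑) (h𝓑A : ∀ A ∈ 𝓐, A ∈ 𝓑)
    (h𝓑inter : ∀ X ∈ 𝓑, ∀ Y ∈ 𝓑, X ∩ Y ∈ 𝓑)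
    (h𝓑union : ∀ X ∈ 𝓑, ∀ Y ∈ 𝓑, X ∪ Y ∈ 𝓑)
    (h𝓑sdiff : ∀ X ∈ 𝓑, ∀ Y ∈ 𝓑, X \ Y ∈ 𝓑)
    (ν : Set Ω → R) (hν : IsValuation 𝓑 ν) :
    (∀ ω : Ω,
      (if ω ∈ Set.univ \ ⋃ A ∈ 𝓐, A then (1 : ℤ) else 0) =
        ∑ X ∈ L, μ X * (if ω ∈ X then 1 else 0)) ∧
    ν (Set.univ \ ⋃ A ∈ 𝓐, A) = ∑ X ∈ L, (μ X : R) * ν X :=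
  stmt6_general 𝓐 hproper L hLdef μ hμ 𝓑 h𝓑univ h𝓑L h𝓑A h𝓑union h𝓑sdiff ν hν
end

section
/- Let G = (V,E) be a finite graph with orientation ε, and let A, B be finite abelian groups of orders p, q. The number of nowhere-zero tension-flows, i.e., pairs (f,g) with f an A-tension and g a B-flow of (G,ε) such that (f(e),g(e)) ≠ (0,0) for every edge e, equals ∑_{X ⊆ E} (−1)^{|X|} p^{r(E) − r(X)} q^{n(E−X)}, where r(X) is the rank (number of vertices minus number of components of the spanning subgraph (V,X)) and n(Y) = |Y| − r(Y) is the nullity. In particular this count depends only on p and q, not on ε or the group structures of A and B. -/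
/-- `f : E → A` is a tension of the digraph `tl, hd : E → V`: it is the
coboundary of a potential `p : V → A`. -/
def IsTension {V E A : Type} [AddCommGroup A] (tl hd : E → V) (f : E → A) : Prop :=
  ∃ p : V → A, ∀ e, f e = p (tl e) - p (hd e)

/-- `g : E → B` is a flow of the digraph `tl, hd : E → V`: conservation holds
at every vertex. -/
def IsFlow {V E B : Type} [Fintype E] [DecidableEq V] [AddCommGroup B]
    (tl hd : E → V) (g : E → B) : Prop :=
  ∀ v : V, ∑ e ∈ Finset.univ.filter (fun e => tl e = v), g e
         = ∑ e ∈ Finset.univ.filter (fun e => hd e = v), g e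

/-- The rank `r⟨X⟩ = |V| - c⟨X⟩` of the spanning subgraph `(V, X)`, where
`c⟨X⟩` is its number of connected components. -/
noncomputable def grank {V E : Type} [Fintype V] (tl hd : E → V) (X : Finset E) : ℕ :=
  Fintype.card V -
    Nat.card (Quot (fun a b : V =>
      ∃ e ∈ X, (tl e = a ∧ hd e = b) ∨ (tl e = b ∧ hd e = a)))

/-!
Inclusion–exclusion over the set `X` of edges on which both `f` and `g` vanish reduces the count
to the number of tension-flows vanishing on `X`, and these are pairs of a tension and a flow
vanishing on `X`. The tensions vanishing on `X` are the coboundaries of potentials constant on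
the components of `⟨X⟩`; the first isomorphism theorem counts `p ^ (c⟨X⟩ - c⟨E⟩)` of them.
The flows vanishing on `X` are the flows of `⟨Xᶜ⟩`, the kernel of the boundary map
`B ^ Xᶜ → B ^ V`, whose image consists of the vertex functions summing to zero on every
component of `⟨Xᶜ⟩`; so there are `q ^ (|Xᶜ| - r⟨Xᶜ⟩)` of them.
-/

open Finset

lemma Nat.eq_pow_sub_of_mul_pow_eq {a b k m : ℕ} (hb : 0 < b) (h : a * b ^ k = b ^ m) :
    a = b ^ (m - k) := by
  by_cases hb1 : b = 1
  · subst hb1; simpa using h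
  have hkm : k ≤ m := (Nat.pow_dvd_pow_iff_le_right (by omega)).mp (Dvd.intro_left a h)
  rw [← Nat.sub_add_cancel hkm, pow_add] at h
  exact Nat.eq_of_mul_eq_mul_right (pow_pos hb k) h

lemma AddMonoidHom.card_ker_mul_card_range {G H : Type*} [AddGroup G] [AddGroup H]
    (f : G →+ H) : Nat.card f.ker * Nat.card f.range = Nat.card G := by
  rw [← AddSubgroup.index_ker, AddSubgroup.card_mul_index]

lemma AddSubgroup.equivalence_single_sub_single_mem {ι G : Type*} [DecidableEq ι] [AddGroup G]
    (H : AddSubgroup (ι → G)) :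
    Equivalence fun a b : ι => ∀ t : G, (Pi.single a t - Pi.single b t : ι → G) ∈ H where
  refl a t := by simp
  symm h t := by simpa using H.neg_mem (h t)
  trans h₁ h₂ t := by simpa using H.add_mem (h₁ t) (h₂ t)

section Pushforward

variable {U V W B : Type*} [Fintype V] [DecidableEq W] [AddCommMonoid B]

def pushforward (π : V → W) : (V → B) →+ (W → B) :=
  ∑ v, (AddMonoidHom.single _ (π v)).comp (Pi.evalAddMonoidHom _ v)

lemma pushforward_apply (π : V → W) (g : V → B) :
    pushforward π g = ∑ v, Pi.single (π v) (g v) := by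
  simp [pushforward]

lemma pushforward_apply_apply (π : V → W) (g : V → B) (w : W) :
    pushforward π g w = ∑ v with π v = w, g v := by
  simp [pushforward_apply, Pi.single_apply, sum_filter, eq_comm]

lemma pushforward_single [DecidableEq V] (π : V → W) (v : V) (t : B) :
    pushforward π (Pi.single v t) = Pi.single (π v) t := by
  rw [pushforward_apply, sum_eq_single v] <;> simp +contextual

lemma pushforward_id [DecidableEq V] : pushforward (B := B) (id : V → V) = .id _ :=
  AddMonoidHom.functions_ext _ _ _ fun v t => by simp [pushforward_single]

lemma pushforward_comp [Fintype W] [DecidableEq U] (f : W → U) (π : V → W) :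
    pushforward (B := B) (f ∘ π) = (pushforward f).comp (pushforward π) := by
  classical
  exact AddMonoidHom.functions_ext _ _ _ fun v t => by simp [pushforward_single]

lemma pushforward_surjective [Fintype W] {π : V → W} (hπ : Function.Surjective π) :
    Function.Surjective (pushforward (B := B) π) := by
  classical
  intro φ
  refine ⟨pushforward (Function.surjInv hπ) φ, ?_⟩
  rw [← AddMonoidHom.comp_apply, ← pushforward_comp,
    show π ∘ Function.surjInv hπ = id from funext (Function.surjInv_eq hπ), pushforward_id,
    AddMonoidHom.id_apply]

lemma pushforward_comp_val (π : V → W) {s : Finset V} {g : V → B} (hg : ∀ v ∉ s, g v = 0) :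
    pushforward (π ∘ (↑) : s → W) (g ∘ (↑)) = pushforward π g := by
  rw [pushforward_apply, pushforward_apply]
  change ∑ v : s, (Pi.single (π v) (g v) : W → B) = _
  rw [sum_coe_sort s fun v => (Pi.single (π v) (g v) : W → B)]
  exact sum_subset (subset_univ s) fun v _ hv => by rw [hg v hv, Pi.single_zero]

end Pushforward

lemma Nat.card_subtype_and_eq_card_finset {α : Type*} {p : α → Prop} (s : Finset (Subtype p))
    (q : α → Prop) (hs : ∀ x : Subtype p, x ∈ s ↔ q x) : Nat.card {a // p a ∧ q a} = #s := by
  rw [← Nat.card_eq_finsetCard]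
  exact Nat.card_congr ((Equiv.subtypeEquivRight hs).trans
    (Equiv.subtypeSubtypeEquivSubtypeInter p q)).symm

namespace TensionFlow

variable {V E : Type} (tl hd : E → V)

def Joined (X : Finset E) (a b : V) : Prop :=
  ∃ e ∈ X, (tl e = a ∧ hd e = b) ∨ (tl e = b ∧ hd e = a)

lemma grank_eq [Fintype V] (X : Finset E) :
    grank tl hd X = Fintype.card V - Nat.card (Quot (Joined tl hd X)) := rfl

variable {tl hd} in
lemma mk_tl_eq_mk_hd {X : Finset E} {e : E} (he : e ∈ X) :
    Quot.mk (Joined tl hd X) (tl e) = Quot.mk _ (hd e) :=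
  Quot.sound ⟨e, he, .inl ⟨rfl, rfl⟩⟩

lemma card_quot_joined_le [Fintype V] (X : Finset E) :
    Nat.card (Quot (Joined tl hd X)) ≤ Fintype.card V :=
  Nat.card_eq_fintype_card (α := V) ▸ Nat.card_le_card_of_surjective _ Quot.mk_surjective

lemma card_quot_joined_antitone [Finite V] {X Y : Finset E} (h : X ⊆ Y) :
    Nat.card (Quot (Joined tl hd Y)) ≤ Nat.card (Quot (Joined tl hd X)) :=
  Nat.card_le_card_of_surjective (Quot.mapRight fun _ _ ⟨e, he, h'⟩ => ⟨e, h he, h'⟩)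
    (Quot.ind fun v => ⟨Quot.mk _ v, rfl⟩)

lemma grank_subgraph [Fintype V] (Y : Finset E) :
    grank (tl ∘ (↑) : Y → V) (hd ∘ (↑)) univ = grank tl hd Y := by
  have : Joined (tl ∘ (↑) : Y → V) (hd ∘ (↑)) univ = Joined tl hd Y := by
    ext a b
    exact ⟨fun ⟨e, _, h⟩ => ⟨e, e.2, h⟩, fun ⟨e, he, h⟩ => ⟨⟨e, he⟩, mem_univ _, h⟩⟩
  rw [grank_eq, grank_eq, this]

section Tension

variable {A : Type} [AddCommGroup A]

def coboundary (X : Finset E) : (Quot (Joined tl hd X) → A) →+ (E → A) :=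
  AddMonoidHom.mk' (fun φ e => φ (.mk _ (tl e)) - φ (.mk _ (hd e)))
    fun _ _ => funext fun _ => add_sub_add_comm ..

lemma mem_range_coboundary (X : Finset E) (f : E → A) :
    f ∈ (coboundary tl hd X).range ↔ IsTension tl hd f ∧ ∀ e ∈ X, f e = 0 := by
  constructor
  · rintro ⟨φ, rfl⟩
    exact ⟨⟨fun v => φ (.mk _ v), fun _ => rfl⟩, fun e he =>
      sub_eq_zero.mpr (congrArg φ (mk_tl_eq_mk_hd he))⟩
  · rintro ⟨⟨p, hp⟩, hX⟩
    have hp_joined : ∀ a b, Joined tl hd X a b → p a = p b := by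
      rintro a b ⟨e, he, ⟨rfl, rfl⟩ | ⟨rfl, rfl⟩⟩
      · exact sub_eq_zero.mp (hp e ▸ hX e he)
      · exact (sub_eq_zero.mp (hp e ▸ hX e he)).symm
    exact ⟨Quot.lift p hp_joined, funext fun e => (hp e).symm⟩

def kerCoboundaryEquiv [Fintype E] (X : Finset E) :
    (coboundary tl hd (A := A) X).ker ≃ (Quot (Joined tl hd univ) → A) where
  toFun φ := Quot.lift (fun v => φ.1 (.mk _ v)) <| by
    rintro a b ⟨e, -, ⟨rfl, rfl⟩ | ⟨rfl, rfl⟩⟩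
    · exact sub_eq_zero.mp (congrFun φ.2 e)
    · exact (sub_eq_zero.mp (congrFun φ.2 e)).symm
  invFun ψ := ⟨ψ ∘ Quot.mapRight fun _ _ ⟨e, _, h⟩ => ⟨e, mem_univ e, h⟩,
    funext fun e => sub_eq_zero.mpr (congrArg ψ (mk_tl_eq_mk_hd (mem_univ e)))⟩
  left_inv φ := Subtype.ext <| funext <| Quot.ind fun _ => rfl
  right_inv ψ := funext <| Quot.ind fun _ => rfl

theorem card_tension_vanishing_on [Fintype V] [Fintype E] [Fintype A] (X : Finset E) :
    Nat.card {f : E → A // IsTension tl hd f ∧ ∀ e ∈ X, f e = 0}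
      = Fintype.card A ^ (grank tl hd univ - grank tl hd X) := by
  have h := (coboundary tl hd (A := A) X).card_ker_mul_card_range
  rw [Nat.card_congr (kerCoboundaryEquiv tl hd X),
    Nat.card_congr (Equiv.subtypeEquivRight (mem_range_coboundary tl hd X)), Nat.card_fun,
    Nat.card_fun, mul_comm, Nat.card_eq_fintype_card (α := A)] at h
  rw [Nat.eq_pow_sub_of_mul_pow_eq Fintype.card_pos h, grank_eq, grank_eq]
  have := card_quot_joined_le tl hd X
  have := card_quot_joined_antitone tl hd (subset_univ X)
  congr 1
  omega

end Tension

section Flow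

variable {B : Type} [AddCommGroup B] [Fintype E] [DecidableEq V]

def boundary : (E → B) →+ (V → B) := pushforward tl - pushforward hd

lemma isFlow_iff_mem_ker_boundary (g : E → B) :
    IsFlow tl hd g ↔ g ∈ (boundary tl hd).ker := by
  simp [IsFlow, boundary, sub_eq_zero, funext_iff, pushforward_apply_apply]

lemma boundary_single [DecidableEq E] (e : E) (t : B) :
    boundary tl hd (Pi.single e t) = Pi.single (tl e) t - Pi.single (hd e) t := by
  simp [boundary, pushforward_single]

lemma single_sub_single_mem_range_boundary [DecidableEq E] {a b : V}
    (hab : Quot.mk (Joined tl hd univ) a = Quot.mk _ b) (t : B) :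
    (Pi.single a t - Pi.single b t : V → B) ∈ (boundary tl hd).range := by
  refine (AddSubgroup.equivalence_single_sub_single_mem _).eqvGen_iff.mp
    (Relation.EqvGen.mono ?_ _ _ (Quot.eqvGen_exact hab)) t
  rintro _ _ ⟨e, -, ⟨rfl, rfl⟩ | ⟨rfl, rfl⟩⟩ t
  · exact ⟨Pi.single e t, boundary_single tl hd e t⟩
  · exact ⟨Pi.single e (-t), by rw [boundary_single, Pi.single_neg, Pi.single_neg, neg_sub_neg]⟩

lemma isFlow_comp_val_iff {Y : Finset E} {g : E → B} (hg : ∀ e ∉ Y, g e = 0) :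
    IsFlow (tl ∘ (↑) : Y → V) (hd ∘ (↑)) (g ∘ (↑)) ↔ IsFlow tl hd g := by
  rw [isFlow_iff_mem_ker_boundary, isFlow_iff_mem_ker_boundary, AddMonoidHom.mem_ker,
    AddMonoidHom.mem_ker, boundary, boundary, AddMonoidHom.sub_apply, AddMonoidHom.sub_apply,
    pushforward_comp_val tl hg, pushforward_comp_val hd hg]

def flowSubgraphEquiv [DecidableEq E] (Y : Finset E) :
    {g : E → B // IsFlow tl hd g ∧ ∀ e ∉ Y, g e = 0}
      ≃ {g : Y → B // IsFlow (tl ∘ (↑)) (hd ∘ (↑)) g} where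
  toFun g := ⟨g.1 ∘ (↑), (isFlow_comp_val_iff tl hd g.2.2).mpr g.2.1⟩
  invFun k := ⟨fun e => if h : e ∈ Y then k.1 ⟨e, h⟩ else 0,
    (isFlow_comp_val_iff tl hd fun e he => dif_neg he).mp
      (by convert k.2 using 1; exact funext fun e => dif_pos e.2),
    fun e he => dif_neg he⟩
  left_inv g := Subtype.ext <| funext fun e => by
    by_cases he : e ∈ Y
    · exact dif_pos he
    · exact (dif_neg he).trans (g.2.2 e he).symm
  right_inv k := Subtype.ext <| funext fun e => dif_pos e.2

variable [Fintype V]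

open scoped Classical in
lemma range_boundary :
    (boundary tl hd).range = (pushforward (B := B) (Quot.mk (Joined tl hd univ))).ker := by
  have := Fintype.ofFinite (Quot (Joined tl hd univ))
  apply le_antisymm
  · rintro _ ⟨g, rfl⟩
    rw [AddMonoidHom.mem_ker, boundary, AddMonoidHom.sub_apply, map_sub,
      ← AddMonoidHom.comp_apply, ← AddMonoidHom.comp_apply, ← pushforward_comp,
      ← pushforward_comp, sub_eq_zero]
    congr 2
    exact funext fun e => mk_tl_eq_mk_hd (mem_univ e)
  · intro h hh
    set rep := Function.surjInv (Quot.mk_surjective (r := Joined tl hd univ))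
    -- Moving each value of `h` to the representative of its component changes `h` by
    -- boundaries, and yields `0` because `h` sums to zero on every component.
    have h_rep : ∑ v, (Pi.single (rep (.mk _ v)) (h v) : V → B) = 0 :=
      (pushforward_apply (rep ∘ Quot.mk _) h).symm.trans <| by
        rw [pushforward_comp, AddMonoidHom.comp_apply, AddMonoidHom.mem_ker.mp hh, map_zero]
    have h_sum : h = ∑ v, (Pi.single v (h v) - Pi.single (rep (.mk _ v)) (h v)) := by
      rw [sum_sub_distrib, h_rep, sub_zero, univ_sum_single]
    rw [h_sum]
    exact sum_mem fun v _ =>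
      single_sub_single_mem_range_boundary tl hd (Function.surjInv_eq _ _).symm _

theorem card_flow [Fintype B] :
    Nat.card {g : E → B // IsFlow tl hd g}
      = Fintype.card B ^ (Fintype.card E - grank tl hd univ) := by
  classical
  have := Fintype.ofFinite (Quot (Joined tl hd univ))
  have hσ := (pushforward (B := B) (Quot.mk (Joined tl hd univ))).card_ker_mul_card_range
  rw [AddMonoidHom.range_eq_top.mpr (pushforward_surjective Quot.mk_surjective),
    AddSubgroup.card_top, ← range_boundary, Nat.card_fun, Nat.card_fun,
    Nat.card_eq_fintype_card (α := V)] at hσ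
  have hbd := (boundary tl hd (B := B)).card_ker_mul_card_range
  rw [Nat.eq_pow_sub_of_mul_pow_eq Nat.card_pos hσ, Nat.card_fun, Nat.card_eq_fintype_card (α := E),
    ← Nat.card_congr (Equiv.subtypeEquivRight (isFlow_iff_mem_ker_boundary tl hd))] at hbd
  rw [Nat.eq_pow_sub_of_mul_pow_eq Nat.card_pos hbd, grank_eq, Nat.card_eq_fintype_card (α := B)]

theorem card_flow_vanishing_on [Fintype B] [DecidableEq E] (X : Finset E) :
    Nat.card {g : E → B // IsFlow tl hd g ∧ ∀ e ∈ X, g e = 0}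
      = Fintype.card B ^ (#Xᶜ - grank tl hd Xᶜ) := by
  have hX : ∀ g : E → B, (IsFlow tl hd g ∧ ∀ e ∈ X, g e = 0) ↔
      (IsFlow tl hd g ∧ ∀ e ∉ Xᶜ, g e = 0) := by
    simp
  rw [Nat.card_congr ((Equiv.subtypeEquivRight hX).trans (flowSubgraphEquiv tl hd Xᶜ)),
    card_flow, grank_subgraph, Fintype.card_coe]

end Flow

theorem card_tension_flow_vanishing_on [Fintype V] [Fintype E] [DecidableEq E] [DecidableEq V]
    {A B : Type} [AddCommGroup A] [Fintype A] [AddCommGroup B] [Fintype B] (X : Finset E) :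
    Nat.card {fg : (E → A) × (E → B) // (IsTension tl hd fg.1 ∧ IsFlow tl hd fg.2) ∧
        ∀ e ∈ X, fg.1 e = 0 ∧ fg.2 e = 0}
      = Fintype.card A ^ (grank tl hd univ - grank tl hd X)
        * Fintype.card B ^ (#Xᶜ - grank tl hd Xᶜ) := by
  rw [← card_tension_vanishing_on, ← card_flow_vanishing_on, ← Nat.card_prod]
  refine Nat.card_congr ((Equiv.subtypeEquivRight fun fg => ?_).trans Equiv.subtypeProdEquivProd)
  simp only [forall_and]
  tauto

end TensionFlow

/-- The number of nowhere-zero tension-flows `(f, g)` with values in finite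
abelian groups `A, B` of orders `p, q` equals
`∑_{X ⊆ E} (-1)^{|X|} p^{r(E) - r(X)} q^{n(E - X)}`; in particular it depends
only on `p` and `q`. -/
theorem stmt7 {V E A B : Type} [Fintype V] [Fintype E] [DecidableEq V] [DecidableEq E]
    [AddCommGroup A] [Fintype A] [AddCommGroup B] [Fintype B]
    (tl hd : E → V) (p q : ℕ) (hp : Fintype.card A = p) (hq : Fintype.card B = q) :
    (Nat.card {fg : (E → A) × (E → B) //
        IsTension tl hd fg.1 ∧ IsFlow tl hd fg.2 ∧
        ∀ e : E, (fg.1 e, fg.2 e) ≠ (0, 0)} : ℤ)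
    = ∑ X : Finset E, (-1 : ℤ) ^ X.card *
        (p : ℤ) ^ (grank tl hd Finset.univ - grank tl hd X) *
        (q : ℤ) ^ ((Xᶜ).card - grank tl hd Xᶜ) := by
  classical
  let zeroAt (e : E) :
      Finset {fg : (E → A) × (E → B) // IsTension tl hd fg.1 ∧ IsFlow tl hd fg.2} :=
    {fg | fg.1.1 e = 0 ∧ fg.1.2 e = 0}
  simp only [← and_assoc]
  rw [Nat.card_subtype_and_eq_card_finset (univ.inf fun e => (zeroAt e)ᶜ) _
      (by simp [zeroAt, mem_inf, Prod.ext_iff]),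
    inclusion_exclusion_card_inf_compl, powerset_univ]
  refine sum_congr rfl fun X _ => ?_
  rw [← Nat.card_subtype_and_eq_card_finset _ (fun fg => ∀ e ∈ X, fg.1 e = 0 ∧ fg.2 e = 0)
      (by simp [zeroAt, mem_inf]),
    TensionFlow.card_tension_flow_vanishing_on, hp, hq]
  push_cast
  ring
end

section
/- Let E be a finite set and ν any function assigning to each pair (X,Y) of subsets of E a value ν(X,Y) in a commutative ring, arising from a valuation on tension-flow subgroups Ω_{X,Y^c}. Then the weighted sum ∑_{Y ⊆ X ⊆ E} u^{|X|} v^{|Y|} ν⁰(X,Y) over pairs, where ν⁰(X,Y) := ∑_{X⊆Z, W⊆Y} (−1)^{|Z−X|+|Y−W|} ν(Z,W), equals ∑_{W ⊆ Z ⊆ E} (uv)^{|W|} (u − uv − 1)^{|Z−W|} (−1)^{|Z|+|W|}·(−1)^{|Z|+|W|} ν(Z,W); equivalently, ∬_{supp f ⊆ ker g} u^{|ker f|} v^{|supp g|} dν(f,g) = ∑_{Y⊆X⊆E} (uv)^{|Y|} (u−uv−1)^{|X−Y|} ν(Ω_{X,Y^c}). -/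
/-!
Exchanging the order of summation, the coefficient of `ν Z W` on the left is the sum of
`u^|X| v^|Y| (-1)^(|Z \ X| + |Y \ W|)` over the chains `W ⊆ Y ⊆ X ⊆ Z`. Both inner sums run over
Boolean intervals and are binomial expansions: the sum over `Y` is `v^|W| (1 - v)^|X \ W|`, and
then the sum over `X` is `(uv)^|W| (u(1 - v) - 1)^|Z \ W|`.
-/

open Finset

namespace Finset

variable {α : Type*} [DecidableEq α]

theorem sum_powerset_sum_powerset_comm {M : Type*} [AddCommMonoid M] (Z : Finset α)
    (f : Finset α → Finset α → M) :
    ∑ X ∈ Z.powerset, ∑ W ∈ X.powerset, f X W = ∑ W ∈ Z.powerset, ∑ X ∈ Icc W Z, f X W :=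
  sum_comm' fun X W => by
    simp only [mem_powerset, mem_Icc]
    exact ⟨fun h => ⟨⟨h.2, h.1⟩, h.2.trans h.1⟩, fun h => ⟨h.1.2, h.1.1⟩⟩

theorem sum_Icc_pow_card_sdiff_mul_pow_card_sdiff {R : Type*} [CommSemiring R]
    {W Z : Finset α} (h : W ⊆ Z) (a b : R) :
    ∑ X ∈ Icc W Z, a ^ (X \ W).card * b ^ (Z \ X).card = (a + b) ^ (Z \ W).card := by
  have hinj : Set.InjOn (W ∪ ·) (Z \ W).powerset := fun S hS T hT hST => by
    simp only [coe_powerset, Set.mem_preimage, Set.mem_powerset_iff, coe_subset] at hS hT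
    rw [← union_sdiff_cancel_left (disjoint_of_subset_right hS disjoint_sdiff),
      ← union_sdiff_cancel_left (disjoint_of_subset_right hT disjoint_sdiff)]
    exact congrArg (· \ W) hST
  have binomial := prod_add (fun _ => a) (fun _ => b) (Z \ W)
  simp only [prod_const] at binomial
  rw [Icc_eq_image_powerset h, sum_image hinj, binomial]
  refine sum_congr rfl fun S hS => ?_
  rw [mem_powerset] at hS
  rw [union_sdiff_cancel_left (disjoint_of_subset_right hS disjoint_sdiff), sdiff_sdiff_left]
  rfl

theorem sum_Icc_sum_Icc_chain_weight {R : Type*} [CommRing R] (u v : R) {W Z : Finset α}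
    (h : W ⊆ Z) :
    ∑ X ∈ Icc W Z, ∑ Y ∈ Icc W X,
        u ^ X.card * v ^ Y.card * (-1 : R) ^ ((Z \ X).card + (Y \ W).card)
      = (u * v) ^ W.card * (u - u * v - 1) ^ (Z \ W).card := by
  have sum_over_Y : ∀ X ∈ Icc W Z, ∑ Y ∈ Icc W X,
        u ^ X.card * v ^ Y.card * (-1 : R) ^ ((Z \ X).card + (Y \ W).card)
      = (u * v) ^ W.card * ((u * (1 - v)) ^ (X \ W).card * (-1) ^ (Z \ X).card) := by
    intro X hX
    have hWX := (mem_Icc.1 hX).1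
    calc _ = u ^ X.card * (-1) ^ (Z \ X).card * v ^ W.card *
          ∑ Y ∈ Icc W X, (-v) ^ (Y \ W).card * 1 ^ (X \ Y).card := by
          rw [mul_sum]
          refine sum_congr rfl fun Y hY => ?_
          rw [← card_sdiff_add_card_eq_card (mem_Icc.1 hY).1]
          ring
      _ = _ := by
          rw [sum_Icc_pow_card_sdiff_mul_pow_card_sdiff hWX, ← card_sdiff_add_card_eq_card hWX]
          simp only [mul_pow]
          ring
  rw [sum_congr rfl sum_over_Y, ← mul_sum, sum_Icc_pow_card_sdiff_mul_pow_card_sdiff h]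
  ring

end Finset

/-- For any valuation values `ν(Z,W)` (with `ν Z W` standing for `ν(Ω_{Z,Wᶜ})`)
and the Möbius-inverted values
`ν⁰(X,Y) = ∑_{X⊆Z, W⊆Y} (-1)^{|Z∖X|+|Y∖W|} ν(Z,W)`, the weighted sum
`∑_{Y⊆X⊆E} u^{|X|} v^{|Y|} ν⁰(X,Y)` (the integral of
`u^{|ker f|} v^{|supp g|}` over `supp f ⊆ ker g`) equals
`∑_{W⊆Z⊆E} (uv)^{|W|} (u - uv - 1)^{|Z∖W|} ν(Z,W)`. -/
theorem stmt11 {E R : Type} [Fintype E] [DecidableEq E] [CommRing R]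
    (u v : R) (ν : Finset E → Finset E → R) :
    ∑ X : Finset E, ∑ Y ∈ X.powerset,
      u ^ X.card * v ^ Y.card *
        (∑ Z ∈ univ.filter (fun Z => X ⊆ Z), ∑ W ∈ Y.powerset,
          (-1 : R) ^ ((Z \ X).card + (Y \ W).card) * ν Z W)
    = ∑ Z : Finset E, ∑ W ∈ Z.powerset,
        (u * v) ^ W.card * (u - u * v - 1) ^ (Z \ W).card * ν Z W := by
  calc _ = ∑ Z : Finset E, ∑ X ∈ Z.powerset, ∑ Y ∈ X.powerset, ∑ W ∈ Y.powerset,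
          u ^ X.card * v ^ Y.card * (-1 : R) ^ ((Z \ X).card + (Y \ W).card) * ν Z W := by
        simp_rw [mul_sum, ← mul_assoc]
        rw [sum_congr rfl fun X _ => sum_comm]
        exact sum_comm' fun X Z => by simp
    _ = ∑ Z : Finset E, ∑ W ∈ Z.powerset, ∑ X ∈ Icc W Z, ∑ Y ∈ Icc W X,
          u ^ X.card * v ^ Y.card * (-1 : R) ^ ((Z \ X).card + (Y \ W).card) * ν Z W := by
        refine sum_congr rfl fun Z _ => ?_
        rw [← sum_powerset_sum_powerset_comm]
        exact sum_congr rfl fun X _ => sum_powerset_sum_powerset_comm X _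
    _ = _ := by
        refine sum_congr rfl fun Z _ => sum_congr rfl fun W hW => ?_
        simp_rw [← sum_mul]
        rw [sum_Icc_sum_Icc_chain_weight u v (mem_powerset.1 hW)]
end

section
/- Finite-set binomial identity: for fixed finite sets W ⊆ Z, ∑_{W ⊆ Y ⊆ X ⊆ Z} (−u)^{|X|} (−v)^{|Y|} = (uv)^{|W|} (uv − u + 1)^{|Z − W|}, where the sum is over all chains W ⊆ Y ⊆ X ⊆ Z of subsets, in the polynomial ring ℤ[u,v]. -/
/-!
Each element of `Z \ W` lies outside `X`, in `X \ Y`, or in `Y`, contributing `1`, `-u` or `uv`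
respectively, while each element of `W` lies in `Y` and contributes `uv`. Summing out `X`
and then `Y` with the binomial theorem over powersets turns this into the product formula.
-/

open Finset

section ChainSums

variable {α R : Type*} [DecidableEq α] [CommSemiring R]

theorem Finset.sum_filter_superset_pow_card_mul_pow_card_sdiff {W Z : Finset α} (hWZ : W ⊆ Z)
    (x y : R) :
    ∑ Y ∈ Z.powerset with W ⊆ Y, x ^ #Y * y ^ #(Z \ Y) = x ^ #W * (x + y) ^ #(Z \ W) := by
  have hinterval : {Y ∈ Z.powerset | W ⊆ Y} = (Z \ W).powerset.image (W ∪ ·) := by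
    rw [← Icc_eq_image_powerset hWZ]
    ext Y
    simp [and_comm]
  have hinj : Set.InjOn (W ∪ ·) (Z \ W).powerset := fun A hA B hB hAB => by
    simp only [coe_powerset, Set.mem_preimage, Set.mem_powerset_iff, coe_subset] at hA hB
    rw [← union_sdiff_cancel_left (disjoint_sdiff.mono_right hA),
      ← union_sdiff_cancel_left (disjoint_sdiff.mono_right hB)]
    exact congrArg (· \ W) hAB
  rw [hinterval, sum_image hinj, ← sum_pow_mul_eq_add_pow, mul_sum]
  refine sum_congr rfl fun A hA => ?_
  rw [mem_powerset] at hA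
  rw [card_union_of_disjoint (disjoint_sdiff.mono_right hA), sdiff_union_distrib,
    ← sdiff_sdiff_left', card_sdiff_of_subset hA, pow_add, mul_assoc]

theorem Finset.sum_chain_pow_card_mul_pow_card {W Z : Finset α} (hWZ : W ⊆ Z) (a b : R) :
    ∑ X ∈ Z.powerset, ∑ Y ∈ X.powerset with W ⊆ Y, a ^ #X * b ^ #Y
      = (a * b) ^ #W * (a * b + (a + 1)) ^ #(Z \ W) := by
  rw [sum_comm' (t' := {Y ∈ Z.powerset | W ⊆ Y}) (s' := fun Y => {X ∈ Z.powerset | Y ⊆ X})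
    (fun X Y => by simp only [mem_powerset, mem_filter]; tauto)]
  calc
    _ = ∑ Y ∈ Z.powerset with W ⊆ Y, (a * b) ^ #Y * (a + 1) ^ #(Z \ Y) := by
      refine sum_congr rfl fun Y hY => ?_
      have hsup := sum_filter_superset_pow_card_mul_pow_card_sdiff
        (mem_powerset.1 (mem_filter.1 hY).1) a (1 : R)
      simp only [one_pow, mul_one] at hsup
      rw [← sum_mul, hsup, mul_pow]
      ring
    _ = _ := sum_filter_superset_pow_card_mul_pow_card_sdiff hWZ _ _

end ChainSums

/-- Finite-set binomial identity in `ℤ[u,v]` (with `u = X 0`, `v = X 1`): for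
finite sets `W ⊆ Z`,
`∑_{W ⊆ Y ⊆ X ⊆ Z} (-u)^{|X|} (-v)^{|Y|} = (uv)^{|W|} (uv - u + 1)^{|Z∖W|}`. -/
theorem stmt12 {α : Type} [DecidableEq α] (W Z : Finset α) (hWZ : W ⊆ Z) :
    ∑ S ∈ Z.powerset, ∑ T ∈ S.powerset.filter (fun T => W ⊆ T),
      (-(MvPolynomial.X 0 : MvPolynomial (Fin 2) ℤ)) ^ S.card *
        (-(MvPolynomial.X 1 : MvPolynomial (Fin 2) ℤ)) ^ T.card
    = ((MvPolynomial.X 0 : MvPolynomial (Fin 2) ℤ) * MvPolynomial.X 1) ^ W.card *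
        ((MvPolynomial.X 0 : MvPolynomial (Fin 2) ℤ) * MvPolynomial.X 1 -
            MvPolynomial.X 0 + 1) ^ (Z \ W).card := by
  rw [sum_chain_pow_card_mul_pow_card hWZ, neg_mul_neg]
  ring
end

section
/- Combinatorial identity for the elliptic case: for finite sets Z, W ⊆ E, ∑ (−u)^{|X|}(−v)^{|Y|}, summed over pairs X ⊆ Z, W ⊆ Y ⊆ E with X ⊆ Y, equals (−v)^{|W|} (1−u)^{|W ∩ Z|} (1−v)^{|E − (W ∪ Z)|} (uv − v + 1)^{|Z − W|} in the field of rational functions ℚ(u,v) (and hence in ℤ[u,v]). -/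
/-!
Summing over `X ⊆ Z ∩ Y` first turns the weight of `Y` into `y ^ |Y| (1 + x) ^ |Y ∩ Z|`, which is
multiplicative in `Y`: a product over `Y` of `y (1 + x)` on `Z` and `y` off `Z`. A multiplicative
weight summed over the interval `[W, E]` of the Boolean lattice factors as `∏_W f · ∏_{E ∖ W} (1 + f)`,
and the four factors of the identity are read off elementwise. This works for any `x`, `y` in a
commutative semiring; the theorem is the case `x = -u`, `y = -v`.
-/

open Finset

namespace Finset

variable {ι R : Type*} [DecidableEq ι] [CommSemiring R]

theorem sum_Icc_prod_eq_prod_mul_prod_one_add {W U : Finset ι} (h : W ⊆ U) (f : ι → R) :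
    ∑ T ∈ Icc W U, ∏ i ∈ T, f i = (∏ i ∈ W, f i) * ∏ i ∈ U \ W, (1 + f i) := by
  have hinj : Set.InjOn (W ∪ ·) ↑(U \ W).powerset := fun A hA B hB hAB => by
    simp only [coe_powerset, Set.mem_preimage, Set.mem_powerset_iff, coe_subset] at hA hB
    rw [← union_sdiff_cancel_left (disjoint_of_subset_right hA disjoint_sdiff),
      ← union_sdiff_cancel_left (disjoint_of_subset_right hB disjoint_sdiff)]
    exact congrArg (· \ W) hAB
  rw [Icc_eq_image_powerset h, sum_image hinj, prod_one_add, mul_sum]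
  refine sum_congr rfl fun T hT => prod_union ?_
  exact disjoint_of_subset_right (mem_powerset.1 hT) disjoint_sdiff

end Finset

theorem sum_powerset_sum_superset_pow_mul_pow {E R : Type*} [Fintype E] [DecidableEq E]
    [CommSemiring R] (Z W : Finset E) (x y : R) :
    ∑ S ∈ Z.powerset, ∑ T ∈ univ.powerset.filter (fun T => W ⊆ T ∧ S ⊆ T), x ^ #S * y ^ #T
      = y ^ #W * (1 + x) ^ #(W ∩ Z) * (1 + y) ^ #(univ \ (W ∪ Z)) *
          (1 + (1 + x) * y) ^ #(Z \ W) := by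
  set f : E → R := fun e => y * if e ∈ Z then 1 + x else 1
  have prod_f (T : Finset E) : ∏ e ∈ T, f e = y ^ #T * (1 + x) ^ #(T ∩ Z) := by
    simp only [f, prod_mul_distrib, prod_const, prod_ite_mem]
  have swap : ∑ S ∈ Z.powerset, ∑ T ∈ univ.powerset.filter (fun T => W ⊆ T ∧ S ⊆ T),
      x ^ #S * y ^ #T = ∑ T ∈ Icc W univ, ∑ S ∈ (T ∩ Z).powerset, x ^ #S * y ^ #T := by
    refine sum_comm' fun S T => ?_
    simp only [mem_powerset, mem_filter, mem_Icc, subset_inter_iff, subset_univ, true_and,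
      and_true]
    tauto
  have inner (T : Finset E) : ∑ S ∈ (T ∩ Z).powerset, x ^ #S * y ^ #T = ∏ e ∈ T, f e := by
    have binomial := sum_pow_mul_eq_add_pow x 1 (T ∩ Z)
    simp only [one_pow, mul_one] at binomial
    rw [← sum_mul, prod_f, binomial, add_comm, mul_comm]
  have one_add_f (e : E) : 1 + f e = if e ∈ Z then 1 + (1 + x) * y else 1 + y := by
    simp only [f]
    split_ifs <;> ring
  have prod_compl : ∏ e ∈ univ \ W, (1 + f e)
      = (1 + y) ^ #(univ \ (W ∪ Z)) * (1 + (1 + x) * y) ^ #(Z \ W) := by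
    have in_Z : {e ∈ univ \ W | e ∈ Z} = Z \ W := by ext; simp [and_comm]
    have notin_Z : {e ∈ univ \ W | e ∉ Z} = univ \ (W ∪ Z) := by ext; simp
    simp only [one_add_f, prod_ite, prod_const, in_Z, notin_Z, mul_comm]
  rw [swap, sum_congr rfl fun T _ => inner T, sum_Icc_prod_eq_prod_mul_prod_one_add
    (subset_univ W), prod_f, prod_compl, ← mul_assoc]

/-- Combinatorial identity (elliptic case) in `ℤ[u,v]` (with `u = X 0`,
`v = X 1`): for subsets `Z, W` of a finite set `E`,
`∑_{X ⊆ Z, W ⊆ Y, X ⊆ Y} (-u)^{|X|} (-v)^{|Y|}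
 = (-v)^{|W|} (1-u)^{|W∩Z|} (1-v)^{|E∖(W∪Z)|} (uv - v + 1)^{|Z∖W|}`. -/
theorem stmt15 {E : Type} [Fintype E] [DecidableEq E] (Z W : Finset E) :
    ∑ S ∈ Z.powerset,
      ∑ T ∈ (univ : Finset E).powerset.filter (fun T => W ⊆ T ∧ S ⊆ T),
        (-(MvPolynomial.X 0 : MvPolynomial (Fin 2) ℤ)) ^ S.card *
          (-(MvPolynomial.X 1 : MvPolynomial (Fin 2) ℤ)) ^ T.card
    = (-(MvPolynomial.X 1 : MvPolynomial (Fin 2) ℤ)) ^ W.card *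
        (1 - (MvPolynomial.X 0 : MvPolynomial (Fin 2) ℤ)) ^ (W ∩ Z).card *
        (1 - (MvPolynomial.X 1 : MvPolynomial (Fin 2) ℤ)) ^ ((univ \ (W ∪ Z)).card) *
        ((MvPolynomial.X 0 : MvPolynomial (Fin 2) ℤ) * MvPolynomial.X 1 -
            MvPolynomial.X 1 + 1) ^ (Z \ W).card := by
  rw [sum_powerset_sum_superset_pow_mul_pow]
  ring
end
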